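/- arXiv:1403.1951 — 7 statements merged into one kernel-verified Lean document; each statement's English description precedes it below -/
import Mathlib

section
/- Let h : Ξ* → Σ* be a solution of a system T of word equations over the set of unknowns Ξ = alp(T). Then there exist a principal solution g of T and a morphism θ : alp(g)* → Σ* with h = θ∘g, and g and θ are unique in the following sense: if g' is a principal solution of T and θ' a morphism with h = θ'∘g', then g' = ρ∘g for a renaming of letters ρ (a bijective letter-to-letter morphism) and θ' = θ∘ρ⁻¹. Moreover: (i) if T is not trivial then |alp(g)| < |alp(T)|; and (ii) if h₁ and h₂ are two solutions of T with the same length type L(h₁) = L(h₂), then their principal solutions coincide up to renaming of letters and the associated morphisms θ₁, θ₂ satisfy L(θ₁) = L(θ₂). -/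
open scoped BigOperators

namespace WordEquations

/-- The set of letters occurring in the images of a (letter-image) morphism. -/
def alph {Ξ Δ : Type*} (h : Ξ → List Δ) : Set Δ := ⋃ x, {a | a ∈ h x}

/-- `h` is a solution of the system `T` of word equations. -/
def IsSolution {Ξ A : Type*} (h : Ξ → List A) (T : Set (List Ξ × List Ξ)) : Prop :=
  ∀ e ∈ T, e.1.flatMap h = e.2.flatMap h

/-- `h` is a solution of the single word equation `E`. -/
def IsSolutionE {Ξ A : Type*} (h : Ξ → List A) (E : List Ξ × List Ξ) : Prop :=
  E.1.flatMap h = E.2.flatMap h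

/-- `θ` is a renaming of letters on the set `S`: it maps each letter of `S` to a
single letter, injectively on `S`. -/
def IsRenamingOn {A B : Type*} (θ : A → List B) (S : Set A) : Prop :=
  (∀ a ∈ S, ∃ b, θ a = [b]) ∧ ∀ a₁ ∈ S, ∀ a₂ ∈ S, θ a₁ = θ a₂ → a₁ = a₂

/-- `g` is a principal solution of `T`: whenever `g = θ ∘ g'` for a solution `g'`
(and a morphism `θ` non-erasing on `alph g'`), `θ` is a renaming of letters. -/
def IsPrincipalSolution {Ξ Δ : Type*} (g : Ξ → List Δ) (T : Set (List Ξ × List Ξ)) : Prop :=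
  IsSolution g T ∧
  ∀ (Δ' : Type) (g' : Ξ → List Δ') (θ : Δ' → List Δ),
    IsSolution g' T → (∀ a ∈ alph g', θ a ≠ []) →
    (∀ x, g x = (g' x).flatMap θ) → IsRenamingOn θ (alph g')

/-- The vector `γ(h)_a = (|h(x₁)|_a, …, |h(xₙ)|_a) ∈ ℚⁿ`. -/
def gamVec {n : ℕ} {Δ : Type*} [DecidableEq Δ] (h : Fin n → List Δ) (a : Δ) :
    Fin n → ℚ := fun j => ((h j).count a : ℚ)

/-- `Γ_h`, the ℚ-span of the vectors `γ(h)_a`. -/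
noncomputable def GammaSpace {n : ℕ} {Δ : Type*} [DecidableEq Δ] (h : Fin n → List Δ) :
    Submodule ℚ (Fin n → ℚ) := Submodule.span ℚ (Set.range (gamVec h))

/-- The rank of a morphism: `dim Γ_h`. -/
noncomputable def morphRank {n : ℕ} {Δ : Type*} [DecidableEq Δ] (h : Fin n → List Δ) : ℕ :=
  Module.finrank ℚ ↥(GammaSpace h)

/-- `Mℕ`: all finite nonempty sums `Σᵢ aᵢ αᵢ` with `aᵢ` positive integers and `αᵢ ∈ M`
(equivalently, nonempty finite sums of elements of `M` with repetitions). -/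
def natSums {n : ℕ} (M : Set (Fin n → ℚ)) : Set (Fin n → ℚ) :=
  {v | ∃ l : List (Fin n → ℚ), l ≠ [] ∧ (∀ x ∈ l, x ∈ M) ∧ l.sum = v}

/-- `M ⊆ ℚⁿ` has rank `r`: the ℚ-span of `M` has dimension `r`, and `M` is not contained
in any finite union of `(r-1)`-dimensional subspaces of its span. -/
def HasRank {n : ℕ} (M : Set (Fin n → ℚ)) (r : ℕ) : Prop :=
  Module.finrank ℚ ↥(Submodule.span ℚ M) = r ∧
  ∀ V : Finset (Submodule ℚ (Fin n → ℚ)),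
    (∀ W ∈ V, W ≤ Submodule.span ℚ M ∧ Module.finrank ℚ ↥W + 1 = r) →
    ¬ M ⊆ ⋃ W ∈ V, (W : Set (Fin n → ℚ))

/-- The monomial `X^α = ∏ᵢ Xᵢ^{αᵢ}` in `ℤ[X₁,…,Xₙ]`. -/
noncomputable def Xpow {n : ℕ} (α : Fin n → ℕ) : MvPolynomial (Fin n) ℤ :=
  ∏ i, MvPolynomial.X i ^ α i

/-- The polynomial `Σ_{a : w_a = j} ∏_{t<a} X_{w_t}` associated with one side of an equation. -/
noncomputable def sideS {n : ℕ} (w : List (Fin n)) (j : Fin n) : MvPolynomial (Fin n) ℤ :=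
  ∑ a : Fin w.length, if w.get a = j then ((w.take (a : ℕ)).map MvPolynomial.X).prod else 0

/-- The polynomial `S_{E,x_j}` of the equation `E = (u,v)`. -/
noncomputable def SE {n : ℕ} (E : List (Fin n) × List (Fin n)) (j : Fin n) :
    MvPolynomial (Fin n) ℤ :=
  sideS E.1 j - sideS E.2 j

/-- Evaluation `p ↦ p(β)`, induced by `Xᵢ ↦ x^{βᵢ}`. -/
noncomputable def evalAt {n : ℕ} (β : Fin n → ℕ) (p : MvPolynomial (Fin n) ℤ) : Polynomial ℤ :=
  MvPolynomial.eval₂ (Int.castRingHom (Polynomial ℤ)) (fun i => Polynomial.X ^ β i) p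

/-- `λ⁺`, the positive part of an integer vector. -/
def lamPos {n : ℕ} (lam : Fin n → ℤ) : Fin n → ℕ := fun i => (lam i).toNat

/-- `λ⁻`, the negative part of an integer vector. -/
def lamNeg {n : ℕ} (lam : Fin n → ℤ) : Fin n → ℕ := fun i => (-(lam i)).toNat

/-- The length type `L(θ_α ∘ h)` of the composition of `h` with the power morphism
`θ_α : aᵢ ↦ aᵢ^{αᵢ}`. -/
def powLenType {n k : ℕ} (α : Fin k → ℕ) (h : Fin n → List (Fin k)) : Fin n → ℕ :=
  fun x => ∑ a, α a * (h x).count a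

/-- The field `ℚ(x)`, realized as the field of fractions of `ℤ[x]`. -/
noncomputable abbrev RatX : Type := FractionRing (Polynomial ℤ)

/-- The vector `𝒮_E(β) ∈ ℚ(x)ⁿ`. -/
noncomputable def SEvec {n : ℕ} (E : List (Fin n) × List (Fin n)) (β : Fin n → ℕ) :
    Fin n → RatX :=
  fun j => algebraMap (Polynomial ℤ) RatX (evalAt β (SE E j))

/-- The set of exponents of the minimal monomials of `p` (exponents in the support of `p`
that are minimal with respect to the componentwise order). -/
noncomputable def minimalSupport {n : ℕ} (p : MvPolynomial (Fin n) ℤ) : Finset (Fin n →₀ ℕ) :=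
  p.support.filter (fun β => ∀ β' ∈ p.support, β' ≤ β → β' = β)


/-!
A solution that is not principal factors as `θ ∘ g'` through a solution `g'` with `θ` not a
renaming; then `g'` is either shorter in total, or of the same total length with strictly more
letters. Hence refining terminates, in a principal solution.

For uniqueness, let `θ₁ ∘ g₁ = θ₂ ∘ g₂` with `g₁`, `g₂` principal. Cutting each pair
`(g₁ x, g₂ x)` into minimal blocks (pairs of nonempty words with equal images having no proper
prefix pair with equal images) gives a morphism `p` over the alphabet of blocks. The cutting is
unique and compatible with concatenation, so `p` is again a solution, and `g₁`, `g₂` are its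
images under the two projections. By principality both projections are renamings: every block
is a pair of single letters, and these pairs form the renaming from `g₁` to `g₂`.
-/

section Alphabet

variable {Ξ Δ : Type*} {g : Ξ → List Δ}

theorem mem_alph {a : Δ} : a ∈ alph g ↔ ∃ x, a ∈ g x := Set.mem_iUnion

theorem mem_alph_of_mem_flatMap {u : List Ξ} {a : Δ} (ha : a ∈ u.flatMap g) : a ∈ alph g :=
  let ⟨x, _, hx⟩ := List.mem_flatMap.1 ha
  mem_alph.2 ⟨x, hx⟩

theorem alph_finite [Finite Ξ] (g : Ξ → List Δ) : (alph g).Finite :=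
  Set.finite_iUnion fun x => (g x).finite_toSet

theorem alph_map {Δ' : Type*} (g : Ξ → List Δ) (f : Δ → Δ') :
    alph (fun x => (g x).map f) = f '' alph g := by
  ext b
  simp only [mem_alph, List.mem_map, Set.mem_image]
  exact ⟨fun ⟨x, a, ha, hab⟩ => ⟨a, ⟨x, ha⟩, hab⟩, fun ⟨a, ⟨x, ha⟩, hab⟩ => ⟨x, a, ha, hab⟩⟩

end Alphabet

section FlatMapLength

variable {α β : Type*} {f : α → List β}

theorem length_le_length_flatMap {l : List α} (hf : ∀ a ∈ l, f a ≠ []) :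
    l.length ≤ (l.flatMap f).length := by
  rw [List.length_flatMap]
  refine (List.length_map _).symm.le.trans (List.length_le_sum_of_one_le _ ?_)
  simp only [List.mem_map]
  rintro _ ⟨a, ha, rfl⟩
  exact List.length_pos_iff.2 (hf a ha)

theorem length_eq_one_of_length_flatMap_eq {l : List α} (hf : ∀ a ∈ l, f a ≠ [])
    (h : (l.flatMap f).length = l.length) : ∀ a ∈ l, (f a).length = 1 := by
  induction l with
  | nil => simp
  | cons b l ih =>
    have hb := List.length_pos_iff.2 (hf b List.mem_cons_self)
    have hl := length_le_length_flatMap fun a ha => hf a (List.mem_cons_of_mem b ha)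
    simp only [List.flatMap_cons, List.length_append, List.length_cons] at h
    intro a ha
    rcases List.mem_cons.1 ha with rfl | ha
    · omega
    · exact ih (fun a ha => hf a (List.mem_cons_of_mem b ha)) (by omega) a ha

theorem eq_of_isPrefix_of_length_flatMap_eq {v w : List α} (hvw : v <+: w)
    (hf : ∀ a ∈ w, f a ≠ []) (h : (v.flatMap f).length = (w.flatMap f).length) : v = w := by
  obtain ⟨r, rfl⟩ := hvw
  simp only [List.flatMap_append, List.length_append, left_eq_add, List.length_eq_zero_iff,
    List.flatMap_eq_nil_iff] at h
  cases r with
  | nil => simp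
  | cons a r => exact absurd (h a List.mem_cons_self) (hf a (by simp))

end FlatMapLength

section Blocks

variable {Δ₁ Δ₂ Sig : Type*} (θ₁ : Δ₁ → List Sig) (θ₂ : Δ₂ → List Sig)

def IsMinimalBlock (c : List Δ₁ × List Δ₂) : Prop :=
  c.1 ≠ [] ∧ c.1.flatMap θ₁ = c.2.flatMap θ₂ ∧
    ∀ d : List Δ₁ × List Δ₂, d.1 ≠ [] → d.1 <+: c.1 → d.2 <+: c.2 →
      d.1.flatMap θ₁ = d.2.flatMap θ₂ → d = c

def IsBlockDecomposition (D : List (List Δ₁ × List Δ₂)) (w₁ : List Δ₁) (w₂ : List Δ₂) : Prop :=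
  (∀ c ∈ D, IsMinimalBlock θ₁ θ₂ c) ∧ D.flatMap Prod.fst = w₁ ∧ D.flatMap Prod.snd = w₂

variable {θ₁ θ₂}

theorem IsMinimalBlock.snd_ne_nil {c : List Δ₁ × List Δ₂} (hc : IsMinimalBlock θ₁ θ₂ c)
    (hθ₁ : ∀ a ∈ c.1, θ₁ a ≠ []) : c.2 ≠ [] := by
  intro h₂
  have := hc.2.1
  rw [h₂, List.flatMap_nil, List.flatMap_eq_nil_iff] at this
  obtain ⟨a, ha⟩ := List.exists_mem_of_ne_nil _ hc.1
  exact hθ₁ a ha (this a ha)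

theorem IsMinimalBlock.eq_of_fst_prefix {c c' : List Δ₁ × List Δ₂} {w₂ : List Δ₂}
    (hc : IsMinimalBlock θ₁ θ₂ c) (hc' : IsMinimalBlock θ₁ θ₂ c') (h₁ : c.1 <+: c'.1)
    (h₂ : c.2 <+: w₂) (h₂' : c'.2 <+: w₂) (hw₂ : ∀ b ∈ w₂, θ₂ b ≠ []) : c = c' := by
  rcases List.prefix_or_prefix_of_prefix h₂ h₂' with h | h
  · exact hc'.2.2 c hc.1 h₁ h hc.2.1
  · have hlen : (c'.2.flatMap θ₂).length = (c.2.flatMap θ₂).length := by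
      refine le_antisymm (h.flatMap θ₂).length_le ?_
      rw [← hc.2.1, ← hc'.2.1]
      exact (h₁.flatMap θ₁).length_le
    have h₂c : c'.2 = c.2 :=
      eq_of_isPrefix_of_length_flatMap_eq h (fun b hb => hw₂ b (h₂.subset hb)) hlen
    exact hc'.2.2 c hc.1 h₁ (h₂c ▸ List.prefix_refl _) hc.2.1

theorem IsMinimalBlock.eq_of_prefix {c c' : List Δ₁ × List Δ₂} {w₁ : List Δ₁} {w₂ : List Δ₂}
    (hc : IsMinimalBlock θ₁ θ₂ c) (hc' : IsMinimalBlock θ₁ θ₂ c') (h₁ : c.1 <+: w₁)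
    (h₁' : c'.1 <+: w₁) (h₂ : c.2 <+: w₂) (h₂' : c'.2 <+: w₂) (hw₂ : ∀ b ∈ w₂, θ₂ b ≠ []) :
    c = c' :=
  (List.prefix_or_prefix_of_prefix h₁ h₁').elim (hc.eq_of_fst_prefix hc' · h₂ h₂' hw₂)
    fun h => (hc'.eq_of_fst_prefix hc h h₂' h₂ hw₂).symm

theorem exists_minimalBlock_prefix {w₁ : List Δ₁} {w₂ : List Δ₂} (hw₁ : w₁ ≠ [])
    (hw : w₁.flatMap θ₁ = w₂.flatMap θ₂) (hw₂ : ∀ b ∈ w₂, θ₂ b ≠ []) :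
    ∃ c, IsMinimalBlock θ₁ θ₂ c ∧ c.1 <+: w₁ ∧ c.2 <+: w₂ := by
  let S : Set (List Δ₁ × List Δ₂) :=
    {d | d.1 ≠ [] ∧ d.1 <+: w₁ ∧ d.2 <+: w₂ ∧ d.1.flatMap θ₁ = d.2.flatMap θ₂}
  obtain ⟨c, ⟨hc₁, hcw₁, hcw₂, hc⟩, hmin⟩ :=
    (measure fun d : List Δ₁ × List Δ₂ => d.1.length).wf.has_min S
      ⟨(w₁, w₂), hw₁, List.prefix_refl _, List.prefix_refl _, hw⟩
  refine ⟨c, ⟨hc₁, hc, fun d hd₁ hdc₁ hdc₂ hd => ?_⟩, hcw₁, hcw₂⟩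
  have hd₁c : d.1 = c.1 := hdc₁.eq_of_length <| le_antisymm hdc₁.length_le <|
    not_lt.1 (hmin d ⟨hd₁, hdc₁.trans hcw₁, hdc₂.trans hcw₂, hd⟩)
  have hd₂c : d.2 = c.2 := eq_of_isPrefix_of_length_flatMap_eq hdc₂
    (fun b hb => hw₂ b (hcw₂.subset hb)) (by rw [← hd, ← hc, hd₁c])
  exact Prod.ext hd₁c hd₂c

theorem exists_isBlockDecomposition {w₁ : List Δ₁} {w₂ : List Δ₂}
    (hw : w₁.flatMap θ₁ = w₂.flatMap θ₂) (hw₂ : ∀ b ∈ w₂, θ₂ b ≠ []) :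
    ∃ D, IsBlockDecomposition θ₁ θ₂ D w₁ w₂ := by
  rcases eq_or_ne w₁ [] with rfl | hw₁
  · have : w₂ = [] := by
      rw [List.flatMap_nil, eq_comm, List.flatMap_eq_nil_iff] at hw
      exact List.eq_nil_iff_forall_not_mem.2 fun b hb => hw₂ b hb (hw b hb)
    exact ⟨[], by simp [IsBlockDecomposition, this]⟩
  obtain ⟨c, hc, ⟨r₁, rfl⟩, ⟨r₂, rfl⟩⟩ := exists_minimalBlock_prefix hw₁ hw hw₂
  have hr : r₁.flatMap θ₁ = r₂.flatMap θ₂ := by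
    simpa only [List.flatMap_append, hc.2.1, List.append_cancel_left_eq] using hw
  have hshorter : r₁.length < (c.1 ++ r₁).length := by
    simpa using List.length_pos_iff.2 hc.1
  obtain ⟨D, hD, hD₁, hD₂⟩ :=
    exists_isBlockDecomposition hr fun b hb => hw₂ b (List.mem_append_right _ hb)
  refine ⟨c :: D, ?_, ?_, ?_⟩
  · simpa [hc] using hD
  · simp [hD₁]
  · simp [hD₂]
termination_by w₁.length

theorem IsBlockDecomposition.unique {D D' : List (List Δ₁ × List Δ₂)} {w₁ : List Δ₁}
    {w₂ : List Δ₂} (hD : IsBlockDecomposition θ₁ θ₂ D w₁ w₂)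
    (hD' : IsBlockDecomposition θ₁ θ₂ D' w₁ w₂) (hw₂ : ∀ b ∈ w₂, θ₂ b ≠ []) : D = D' := by
  induction D generalizing D' w₁ w₂ with
  | nil =>
    obtain ⟨hmin', h₁', -⟩ := hD'
    rw [← hD.2.1, List.flatMap_nil, List.flatMap_eq_nil_iff] at h₁'
    cases D' with
    | nil => rfl
    | cons c' _ => exact absurd (h₁' c' List.mem_cons_self) (hmin' c' List.mem_cons_self).1
  | cons c D ih =>
    obtain ⟨hmin, rfl, rfl⟩ := hD
    obtain ⟨hmin', h₁, h₂⟩ := hD'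
    cases D' with
    | nil =>
      rw [List.flatMap_nil, eq_comm, List.flatMap_eq_nil_iff] at h₁
      exact absurd (h₁ c List.mem_cons_self) (hmin c List.mem_cons_self).1
    | cons c' D' =>
      simp only [List.flatMap_cons] at h₁ h₂ hw₂
      have hcc' : c = c' :=
        (hmin c List.mem_cons_self).eq_of_prefix (hmin' c' List.mem_cons_self)
          (List.prefix_append _ _) (h₁ ▸ List.prefix_append _ _) (List.prefix_append _ _)
          (h₂ ▸ List.prefix_append _ _) hw₂
      subst hcc'
      rw [ih ⟨fun d hd => hmin d (List.mem_cons_of_mem c hd), rfl, rfl⟩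
        ⟨fun d hd => hmin' d (List.mem_cons_of_mem c hd),
          List.append_cancel_left h₁, List.append_cancel_left h₂⟩
        fun b hb => hw₂ b (List.mem_append_right _ hb)]

theorem IsBlockDecomposition.flatMap {ι : Type*} {p : ι → List (List Δ₁ × List Δ₂)}
    {g₁ : ι → List Δ₁} {g₂ : ι → List Δ₂} (hp : ∀ x, IsBlockDecomposition θ₁ θ₂ (p x) (g₁ x) (g₂ x))
    (u : List ι) : IsBlockDecomposition θ₁ θ₂ (u.flatMap p) (u.flatMap g₁) (u.flatMap g₂) := by
  refine ⟨fun c hc => ?_, ?_, ?_⟩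
  · obtain ⟨x, -, hx⟩ := List.mem_flatMap.1 hc
    exact (hp x).1 c hx
  · rw [List.flatMap_assoc]
    exact List.flatMap_congr fun x _ => (hp x).2.1
  · rw [List.flatMap_assoc]
    exact List.flatMap_congr fun x _ => (hp x).2.2

end Blocks

section Uniqueness

variable {Ξ : Type*} {T : Set (List Ξ × List Ξ)}

theorem exists_isSolution_isBlockDecomposition {Δ₁ Δ₂ Sig : Type*} {θ₁ : Δ₁ → List Sig}
    {θ₂ : Δ₂ → List Sig} {g₁ : Ξ → List Δ₁} {g₂ : Ξ → List Δ₂} (hg₁ : IsSolution g₁ T)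
    (hg₂ : IsSolution g₂ T) (hθ₂ : ∀ b ∈ alph g₂, θ₂ b ≠ [])
    (h : ∀ x, (g₁ x).flatMap θ₁ = (g₂ x).flatMap θ₂) :
    ∃ p : Ξ → List (List Δ₁ × List Δ₂),
      IsSolution p T ∧ ∀ x, IsBlockDecomposition θ₁ θ₂ (p x) (g₁ x) (g₂ x) := by
  choose p hp using fun x =>
    exists_isBlockDecomposition (h x) fun b hb => hθ₂ b (mem_alph.2 ⟨x, hb⟩)
  refine ⟨p, fun e he => ?_, hp⟩
  have h₁ := IsBlockDecomposition.flatMap hp e.1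
  rw [hg₁ e he, hg₂ e he] at h₁
  exact h₁.unique (IsBlockDecomposition.flatMap hp e.2) fun b hb =>
    hθ₂ b (mem_alph_of_mem_flatMap hb)

theorem exists_injective_of_isRenamingOn_fst_snd {Δ₁ Δ₂ : Type*}
    {S : Set (List Δ₁ × List Δ₂)} (hfst : IsRenamingOn Prod.fst S)
    (hsnd : IsRenamingOn Prod.snd S) (hcover : ∀ a, ∃ c ∈ S, a ∈ c.1) :
    ∃ ρ : Δ₁ → Δ₂, Function.Injective ρ ∧ (∀ a, ([a], [ρ a]) ∈ S) ∧
      ∀ c ∈ S, c.2 = c.1.map ρ := by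
  have hpair : ∀ c ∈ S, ∃ a b, c = ([a], [b]) := fun c hc =>
    let ⟨a, ha⟩ := hfst.1 c hc
    let ⟨b, hb⟩ := hsnd.1 c hc
    ⟨a, b, Prod.ext ha hb⟩
  have hex : ∀ a, ∃ b, ([a], [b]) ∈ S := by
    intro a
    obtain ⟨c, hc, hac⟩ := hcover a
    obtain ⟨a', b, rfl⟩ := hpair c hc
    rw [List.mem_singleton.1 hac]
    exact ⟨b, hc⟩
  choose ρ hρ using hex
  refine ⟨ρ, fun a a' haa' => ?_, hρ, fun c hc => ?_⟩
  · simpa using congrArg Prod.fst (hsnd.2 _ (hρ a) _ (hρ a') (by simp [haa']))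
  · obtain ⟨a, b, rfl⟩ := hpair c hc
    simpa using (congrArg Prod.snd (hfst.2 _ (hρ a) _ hc rfl)).symm

theorem IsPrincipalSolution.exists_renaming {Δ₁ Δ₂ : Type} {Sig : Type*} {θ₁ : Δ₁ → List Sig}
    {θ₂ : Δ₂ → List Sig} {g₁ : Ξ → List Δ₁} {g₂ : Ξ → List Δ₂} (hg₁ : IsPrincipalSolution g₁ T)
    (hg₂ : IsPrincipalSolution g₂ T) (hg₁univ : alph g₁ = Set.univ)
    (hθ₁ : ∀ a ∈ alph g₁, θ₁ a ≠ []) (hθ₂ : ∀ b ∈ alph g₂, θ₂ b ≠ [])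
    (h : ∀ x, (g₁ x).flatMap θ₁ = (g₂ x).flatMap θ₂) :
    ∃ ρ : Δ₁ → Δ₂, Set.InjOn ρ (alph g₁) ∧ ρ '' alph g₁ = alph g₂ ∧
      (∀ x, g₂ x = (g₁ x).map ρ) ∧ ∀ a ∈ alph g₁, θ₂ (ρ a) = θ₁ a := by
  obtain ⟨p, hp, hpD⟩ := exists_isSolution_isBlockDecomposition hg₁.1 hg₂.1 hθ₂ h
  have hfst_mem : ∀ {c a}, c ∈ alph p → a ∈ c.1 → a ∈ alph g₁ := fun hc ha =>
    let ⟨x, hx⟩ := mem_alph.1 hc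
    mem_alph.2 ⟨x, (hpD x).2.1 ▸ List.mem_flatMap.2 ⟨_, hx, ha⟩⟩
  have hblock : ∀ c ∈ alph p, IsMinimalBlock θ₁ θ₂ c := fun c hc =>
    let ⟨x, hx⟩ := mem_alph.1 hc
    (hpD x).1 c hx
  have hfst : IsRenamingOn Prod.fst (alph p) :=
    hg₁.2 _ p Prod.fst hp (fun c hc => (hblock c hc).1) fun x => (hpD x).2.1.symm
  have hsnd : IsRenamingOn Prod.snd (alph p) :=
    hg₂.2 _ p Prod.snd hp
      (fun c hc => (hblock c hc).snd_ne_nil fun a ha => hθ₁ a (hfst_mem hc ha))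
      fun x => (hpD x).2.2.symm
  obtain ⟨ρ, hρinj, hρ, hρblock⟩ := exists_injective_of_isRenamingOn_fst_snd hfst hsnd fun a => by
    obtain ⟨x, hx⟩ := mem_alph.1 (hg₁univ ▸ Set.mem_univ a)
    rw [← (hpD x).2.1] at hx
    obtain ⟨c, hc, hac⟩ := List.mem_flatMap.1 hx
    exact ⟨c, mem_alph.2 ⟨x, hc⟩, hac⟩
  have hmap : ∀ x, g₂ x = (g₁ x).map ρ := by
    intro x
    rw [← (hpD x).2.1, ← (hpD x).2.2, List.map_flatMap]
    exact List.flatMap_congr fun c hc => hρblock c (mem_alph.2 ⟨x, hc⟩)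
  refine ⟨ρ, hρinj.injOn, ?_, hmap, fun a _ => by simpa using ((hblock _ (hρ a)).2.1).symm⟩
  rw [← alph_map]
  exact congrArg alph (funext hmap).symm

end Uniqueness

section Existence

variable {Ξ : Type*} [Fintype Ξ] {T : Set (List Ξ × List Ξ)}

def totalLength {Δ : Type*} (g : Ξ → List Δ) : ℕ := ∑ x, (g x).length

theorem ncard_alph_le_totalLength {Δ : Type*} (g : Ξ → List Δ) :
    (alph g).ncard ≤ totalLength g := by
  classical
  calc (alph g).ncard = (Finset.univ.biUnion fun x => (g x).toFinset).card := by
        rw [← Set.ncard_coe_finset]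
        congr 1
        ext a
        simp [mem_alph]
    _ ≤ ∑ x, (g x).toFinset.card := Finset.card_biUnion_le
    _ ≤ totalLength g := Finset.sum_le_sum fun x _ => List.toFinset_card_le _

theorem totalLength_lt_or_ncard_alph_lt {Δ Δ' : Type*} {g : Ξ → List Δ} {g' : Ξ → List Δ'}
    {θ : Δ' → List Δ} (hθ : ∀ a ∈ alph g', θ a ≠ []) (hg : ∀ x, g x = (g' x).flatMap θ)
    (hθren : ¬ IsRenamingOn θ (alph g')) :
    totalLength g' < totalLength g ∨
      totalLength g' = totalLength g ∧ (alph g).ncard < (alph g').ncard := by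
  have hle : ∀ x, (g' x).length ≤ (g x).length := fun x =>
    hg x ▸ length_le_length_flatMap fun a ha => hθ a (mem_alph.2 ⟨x, ha⟩)
  rcases (Finset.sum_le_sum fun x _ => hle x).lt_or_eq with hlt | heq
  · exact Or.inl hlt
  refine Or.inr ⟨heq, ?_⟩
  have hlen : ∀ x, (g' x).length = (g x).length := fun x =>
    (Finset.sum_eq_sum_iff_of_le fun x _ => hle x).1 heq x (Finset.mem_univ x)
  have hsingle : ∀ a ∈ alph g', ∃ b, θ a = [b] := by
    intro a ha
    obtain ⟨x, hx⟩ := mem_alph.1 ha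
    refine List.length_eq_one_iff.1 (length_eq_one_of_length_flatMap_eq
      (fun a ha => hθ a (mem_alph.2 ⟨x, ha⟩)) ?_ a hx)
    rw [← hg x, hlen x]
  have hfin := alph_finite g'
  have hmaps : ∀ b ∈ alph g, [b] ∈ θ '' alph g' := by
    intro b hb
    obtain ⟨x, hx⟩ := mem_alph.1 hb
    rw [hg x] at hx
    obtain ⟨a, ha, hba⟩ := List.mem_flatMap.1 hx
    have ha' : a ∈ alph g' := mem_alph.2 ⟨x, ha⟩
    obtain ⟨b', hb'⟩ := hsingle a ha'
    rw [hb', List.mem_singleton] at hba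
    exact ⟨a, ha', hba ▸ hb'⟩
  have hninj : ¬ Set.InjOn θ (alph g') := fun hinj => hθren ⟨hsingle, hinj⟩
  calc (alph g).ncard ≤ (θ '' alph g').ncard :=
        Set.ncard_le_ncard_of_injOn _ hmaps List.singleton_injective.injOn (hfin.image θ)
    _ < (alph g').ncard :=
        (Set.ncard_image_le hfin).lt_of_ne fun h => hninj ((Set.ncard_image_iff hfin).1 h)

theorem IsSolution.exists_isPrincipalSolution {Sig : Type} {h : Ξ → List Sig}
    (hh : IsSolution h T) :
    ∃ (Δ : Type) (g : Ξ → List Δ) (θ : Δ → List Sig),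
      IsPrincipalSolution g T ∧ (∀ a ∈ alph g, θ a ≠ []) ∧ ∀ x, h x = (g x).flatMap θ := by
  by_cases hp : IsPrincipalSolution h T
  · exact ⟨Sig, h, fun a => [a], hp, fun _ _ => List.cons_ne_nil _ _,
      fun x => (List.flatMap_singleton' _).symm⟩
  obtain ⟨Δ', g', θ, hg', hθ, hhg, hθren⟩ : ∃ (Δ' : Type) (g' : Ξ → List Δ') (θ : Δ' → List Sig),
      IsSolution g' T ∧ (∀ a ∈ alph g', θ a ≠ []) ∧ (∀ x, h x = (g' x).flatMap θ) ∧
        ¬ IsRenamingOn θ (alph g') := by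
    simpa [IsPrincipalSolution, hh] using hp
  have hdec := totalLength_lt_or_ncard_alph_lt hθ hhg hθren
  obtain ⟨Δ, g, τ, hg, hτ, hg'g⟩ := IsSolution.exists_isPrincipalSolution hg'
  refine ⟨Δ, g, fun c => (τ c).flatMap θ, hg, fun c hc => ?_, fun x => ?_⟩
  · obtain ⟨x, hx⟩ := mem_alph.1 hc
    obtain ⟨a, ha⟩ := List.exists_mem_of_ne_nil _ (hτ c hc)
    have ha' : a ∈ alph g' := mem_alph.2 ⟨x, hg'g x ▸ List.mem_flatMap.2 ⟨c, hx, ha⟩⟩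
    simpa [List.flatMap_eq_nil_iff] using ⟨a, ha, hθ a ha'⟩
  · rw [hhg, hg'g, List.flatMap_assoc]
termination_by (totalLength h, totalLength h - (alph h).ncard)
decreasing_by
  rcases hdec with hlt | ⟨heq, hlt⟩
  · exact Prod.Lex.left _ _ hlt
  · rw [heq]
    have := ncard_alph_le_totalLength g'
    exact Prod.Lex.right _ (by omega)

end Existence

section Restriction

variable {Ξ Δ : Type*} {T : Set (List Ξ × List Ξ)}

def restrictAlph (g : Ξ → List Δ) : Ξ → List (alph g) :=
  fun x => (g x).pmap Subtype.mk fun _ ha => mem_alph.2 ⟨x, ha⟩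

theorem map_val_restrictAlph (g : Ξ → List Δ) (x : Ξ) :
    (restrictAlph g x).map Subtype.val = g x := by
  simp [restrictAlph, List.map_pmap]

theorem alph_restrictAlph (g : Ξ → List Δ) : alph (restrictAlph g) = Set.univ := by
  refine Set.eq_univ_of_forall fun ⟨a, ha⟩ => ?_
  obtain ⟨x, hx⟩ := mem_alph.1 ha
  exact mem_alph.2 ⟨x, by simpa [restrictAlph] using hx⟩

theorem IsPrincipalSolution.restrictAlph {g : Ξ → List Δ} (hg : IsPrincipalSolution g T) :
    IsPrincipalSolution (restrictAlph g) T := by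
  refine ⟨fun e he => List.map_injective_iff.2 Subtype.val_injective ?_, ?_⟩
  · simpa only [List.map_flatMap, map_val_restrictAlph] using hg.1 e he
  · intro Δ' g' θ hg' hθ hgθ
    have hren := hg.2 Δ' g' (fun a => (θ a).map Subtype.val) hg'
      (fun a ha => by simpa only [ne_eq, List.map_eq_nil_iff] using hθ a ha)
      fun x => by rw [← map_val_restrictAlph g x, hgθ x, List.map_flatMap]
    refine ⟨fun a ha => ?_, fun a₁ h₁ a₂ h₂ he => hren.2 a₁ h₁ a₂ h₂ (congrArg _ he)⟩
    obtain ⟨b, hb⟩ := hren.1 a ha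
    obtain ⟨b', hb', -⟩ := List.map_eq_singleton_iff.1 hb
    exact ⟨b', hb'⟩

-- Working over `alph g` makes the renamings `ρ` of the theorem definable on all of `Δ`, also
-- when `h` is the empty solution and the other principal solution has an empty alphabet.
theorem IsSolution.exists_isPrincipalSolution_alph_eq_univ [Fintype Ξ] {Sig : Type}
    {h : Ξ → List Sig} (hh : IsSolution h T) :
    ∃ (Δ : Type) (g : Ξ → List Δ) (θ : Δ → List Sig), IsPrincipalSolution g T ∧
      alph g = Set.univ ∧ (∀ a ∈ alph g, θ a ≠ []) ∧ ∀ x, h x = (g x).flatMap θ := by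
  obtain ⟨Δ, g, θ, hg, hθ, hhg⟩ := hh.exists_isPrincipalSolution
  refine ⟨alph g, restrictAlph g, fun a => θ a, hg.restrictAlph, alph_restrictAlph g,
    fun a _ => hθ a a.2, fun x => ?_⟩
  rw [hhg x, ← map_val_restrictAlph g x, List.flatMap_map]

end Restriction

section Heads

variable {Ξ Δ : Type*} {T : Set (List Ξ × List Ξ)}

theorem exists_head?_eq_of_mem_head?_flatMap {g : Ξ → List Δ} {u : List Ξ} {a : Δ}
    (ha : a ∈ (u.flatMap g).head?) : ∃ x, (g x).head? = some a := by
  induction u with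
  | nil => simp at ha
  | cons x u ih =>
    rw [List.flatMap_cons, List.head?_append] at ha
    cases hx : (g x).head? with
    | none => exact ih (by simpa [hx] using ha)
    | some b => exact ⟨x, by simpa [hx] using ha⟩

theorem eq_map_singleton_flatten {L : List (List Δ)} (h : ∀ G ∈ L, ∃ b, G = [b]) :
    L = L.flatten.map fun b => [b] := by
  induction L with
  | nil => rfl
  | cons G L ih =>
    obtain ⟨b, rfl⟩ := h _ List.mem_cons_self
    rw [List.flatten_cons, List.map_append, ← ih fun G hG => h G (List.mem_cons_of_mem _ hG)]
    rfl

theorem IsPrincipalSolution.exists_head?_eq {Δ : Type} {g : Ξ → List Δ}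
    (hg : IsPrincipalSolution g T) {a : Δ} (ha : a ∈ alph g) : ∃ x, (g x).head? = some a := by
  classical
  by_contra! hhead
  -- if no `g x` starts with `a`, gluing every `a` to the preceding letter factors `g` properly
  let r : Δ → Δ → Bool := fun _ b => b = a
  let g' : Ξ → List (List Δ) := fun x => (g x).splitBy r
  have hsplit : ∀ u : List Ξ, u.flatMap g' = (u.flatMap g).splitBy r := by
    intro u
    induction u with
    | nil => simp
    | cons x u ih =>
      rw [List.flatMap_cons, List.flatMap_cons, ih, List.splitBy_append]
      intro _ _ b hb
      obtain ⟨y, hy⟩ := exists_head?_eq_of_mem_head?_flatMap hb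
      simpa [r] using fun hba : b = a => hhead y (hba ▸ hy)
  have hren := hg.2 _ g' id (fun e he => by rw [hsplit, hsplit, hg.1 e he])
    (fun G hG => by obtain ⟨x, hx⟩ := mem_alph.1 hG; exact List.ne_nil_of_mem_splitBy hx)
    fun x => by simp [g', List.flatten_splitBy]
  obtain ⟨x, hx⟩ := mem_alph.1 ha
  have hsingle : (g x).splitBy r = (g x).map fun b => [b] := by
    conv_rhs => rw [← List.flatten_splitBy r (g x)]
    exact eq_map_singleton_flatten fun G hG => hren.1 G (mem_alph.2 ⟨x, hG⟩)
  have hchain := List.isChain_getLast_head_splitBy r (g x)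
  rw [hsingle, List.isChain_map] at hchain
  refine hchain.induction (· ≠ a) (g x) (fun _ c hc _ => by simpa [r] using hc)
    (fun hne h => hhead x ?_) a hx rfl
  rw [List.head?_eq_some_head hne, h]

end Heads

theorem exists_ne_head?_eq_of_flatMap_eq {Ξ Δ : Type*} {g : Ξ → List Δ} (hg : ∀ x, g x ≠ []) :
    ∀ {u v : List Ξ}, u ≠ v → u.flatMap g = v.flatMap g →
      ∃ x y, x ≠ y ∧ (g x).head? = (g y).head?
  | [], [], huv, _ => absurd rfl huv
  | [], y :: _, _, h => absurd h.symm (by simp [hg y])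
  | x :: _, [], _, h => absurd h (by simp [hg x])
  | x :: u, y :: v, huv, h => by
    rw [List.flatMap_cons, List.flatMap_cons] at h
    by_cases hxy : x = y
    · subst hxy
      exact exists_ne_head?_eq_of_flatMap_eq hg (fun huv' => huv (congrArg _ huv'))
        (List.append_cancel_left h)
    · refine ⟨x, y, hxy, ?_⟩
      simpa only [List.head?_append_of_ne_nil _ (hg x), List.head?_append_of_ne_nil _ (hg y)]
        using congrArg List.head? h

theorem IsPrincipalSolution.ncard_alph_lt {Ξ : Type*} {Δ : Type} [Fintype Ξ]
    {T : Set (List Ξ × List Ξ)} {g : Ξ → List Δ} (hg : IsPrincipalSolution g T)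
    {e : List Ξ × List Ξ} (he : e ∈ T) (hne : e.1 ≠ e.2) : (alph g).ncard < Fintype.card Ξ := by
  classical
  let heads := Finset.univ.image fun x => (g x).head?
  have hle : (alph g).ncard ≤ (heads.erase none).card := by
    rw [← Set.ncard_coe_finset]
    refine Set.ncard_le_ncard_of_injOn some (fun a ha => ?_) (Option.some_injective _).injOn
    obtain ⟨x, hx⟩ := hg.exists_head?_eq ha
    simpa [heads] using ⟨x, hx⟩
  have hcard : heads.card ≤ Fintype.card Ξ := Finset.card_image_le
  by_cases! hnil : ∃ x, g x = []
  · obtain ⟨x, hx⟩ := hnil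
    have hmem : none ∈ heads := Finset.mem_image.2 ⟨x, Finset.mem_univ x, by simp [hx]⟩
    have := Finset.card_erase_of_mem hmem
    have := Finset.card_pos.2 ⟨_, hmem⟩
    omega
  · obtain ⟨x, y, hxy, hxyeq⟩ := exists_ne_head?_eq_of_flatMap_eq hnil hne (hg.1 e he)
    have hninj : heads.card ≠ Fintype.card Ξ := fun h =>
      hxy (Finset.card_image_iff.1 h (Finset.mem_coe.2 (Finset.mem_univ x))
        (Finset.mem_coe.2 (Finset.mem_univ y)) hxyeq)
    have := Finset.card_erase_le (s := heads) (a := none)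
    omega

theorem flatMap_zip {Ξ α β : Type*} {h₁ : Ξ → List α} {h₂ : Ξ → List β}
    (hlen : ∀ x, (h₁ x).length = (h₂ x).length) (u : List Ξ) :
    u.flatMap (fun x => (h₁ x).zip (h₂ x)) = (u.flatMap h₁).zip (u.flatMap h₂) := by
  induction u with
  | nil => rfl
  | cons x u ih =>
    rw [List.flatMap_cons, List.flatMap_cons, List.flatMap_cons, ih, List.zip_append (hlen x)]

theorem IsPrincipalSolution.exists_renaming_of_length_eq {Ξ : Type*} {Sig Sig₂ Δ Δ₂ : Type}
    [Fintype Ξ] {T : Set (List Ξ × List Ξ)} {h : Ξ → List Sig} {h₂ : Ξ → List Sig₂}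
    {g : Ξ → List Δ} {θ : Δ → List Sig} {g₂ : Ξ → List Δ₂} {θ₂ : Δ₂ → List Sig₂}
    (hh : IsSolution h T) (hh₂ : IsSolution h₂ T) (hlen : ∀ x, (h x).length = (h₂ x).length)
    (hg : IsPrincipalSolution g T) (hguniv : alph g = Set.univ) (hθ : ∀ a ∈ alph g, θ a ≠ [])
    (hhg : ∀ x, h x = (g x).flatMap θ) (hg₂ : IsPrincipalSolution g₂ T)
    (hθ₂ : ∀ a ∈ alph g₂, θ₂ a ≠ []) (hhg₂ : ∀ x, h₂ x = (g₂ x).flatMap θ₂) :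
    ∃ ρ : Δ → Δ₂, Set.InjOn ρ (alph g) ∧ ρ '' alph g = alph g₂ ∧
      (∀ x, g₂ x = (g x).map ρ) ∧ ∀ a ∈ alph g, (θ₂ (ρ a)).length = (θ a).length := by
  -- `h` and `h₂` are both read off the solution `x ↦ zip (h x) (h₂ x)`
  have hz : IsSolution (fun x => (h x).zip (h₂ x)) T := fun e he => by
    simp only [flatMap_zip hlen, hh e he, hh₂ e he]
  obtain ⟨Δm, m, τ, hm, hmuniv, hτ, hzm⟩ := hz.exists_isPrincipalSolution_alph_eq_univ
  have hhm : ∀ x, h x = (m x).flatMap fun c => (τ c).map Prod.fst := fun x => by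
    rw [← List.map_flatMap, ← hzm x, List.map_fst_zip (hlen x).le]
  have hh₂m : ∀ x, h₂ x = (m x).flatMap fun c => (τ c).map Prod.snd := fun x => by
    rw [← List.map_flatMap, ← hzm x, List.map_snd_zip (hlen x).ge]
  obtain ⟨ρ₁, hinj₁, himg₁, hmap₁, hθρ₁⟩ := hg.exists_renaming hm hguniv hθ
    (fun c hc => by simpa using hτ c hc) fun x => (hhg x).symm.trans (hhm x)
  obtain ⟨ρ₂, hinj₂, himg₂, hmap₂, hθρ₂⟩ := hm.exists_renaming hg₂ hmuniv
    (fun c hc => by simpa using hτ c hc) hθ₂ fun x => (hh₂m x).symm.trans (hhg₂ x)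
  have hmaps : Set.MapsTo ρ₁ (alph g) (alph m) := himg₁ ▸ Set.mapsTo_image ρ₁ _
  refine ⟨ρ₂ ∘ ρ₁, hinj₂.comp hinj₁ hmaps, by rw [Set.image_comp, himg₁, himg₂],
    fun x => by rw [hmap₂, hmap₁, List.map_map], fun a ha => ?_⟩
  simp [Function.comp_apply, hθρ₂ _ (hmaps ha), ← hθρ₁ a ha]

theorem principal_solution_exists_unique_general {Ξ Sig : Type} [Fintype Ξ]
    (T : Set (List Ξ × List Ξ))
    (h : Ξ → List Sig) (hsol : IsSolution h T) :
    ∃ (Δ : Type) (g : Ξ → List Δ) (θ : Δ → List Sig),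
      IsPrincipalSolution g T ∧
      (∀ a ∈ alph g, θ a ≠ []) ∧
      (∀ x, h x = (g x).flatMap θ) ∧
      -- uniqueness up to renaming of letters:
      (∀ (Δ' : Type) (g' : Ξ → List Δ') (θ' : Δ' → List Sig),
        IsPrincipalSolution g' T → (∀ a ∈ alph g', θ' a ≠ []) →
        (∀ x, h x = (g' x).flatMap θ') →
        ∃ ρ : Δ → Δ', Set.InjOn ρ (alph g) ∧ ρ '' alph g = alph g' ∧
          (∀ x, g' x = (g x).map ρ) ∧
          (∀ a ∈ alph g, θ' (ρ a) = θ a)) ∧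
      -- (i) if `T` is not trivial then `|alph g| < |alph T| = |Ξ|`:
      ((¬ ∀ e ∈ T, e.1 = e.2) → (alph g).Finite ∧ (alph g).ncard < Fintype.card Ξ) ∧
      -- (ii) solutions with the same length type have the same principal solution up to
      -- renaming, and the associated morphisms have the same length type:
      (∀ (Sig₂ Δ₂ : Type) (h₂ : Ξ → List Sig₂) (g₂ : Ξ → List Δ₂) (θ₂ : Δ₂ → List Sig₂),
        IsSolution h₂ T → (∀ x, (h x).length = (h₂ x).length) →
        IsPrincipalSolution g₂ T → (∀ a ∈ alph g₂, θ₂ a ≠ []) →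
        (∀ x, h₂ x = (g₂ x).flatMap θ₂) →
        ∃ ρ : Δ → Δ₂, Set.InjOn ρ (alph g) ∧ ρ '' alph g = alph g₂ ∧
          (∀ x, g₂ x = (g x).map ρ) ∧
          (∀ a ∈ alph g, (θ₂ (ρ a)).length = (θ a).length)) := by
  obtain ⟨Δ, g, θ, hg, hguniv, hθ, hhg⟩ := hsol.exists_isPrincipalSolution_alph_eq_univ
  refine ⟨Δ, g, θ, hg, hθ, hhg, fun Δ' g' θ' hg' hθ' hhg' => ?_, fun hT => ?_,
    fun Sig₂ Δ₂ h₂ g₂ θ₂ hsol₂ hlen hg₂ hθ₂ hhg₂ => ?_⟩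
  · exact hg.exists_renaming hg' hguniv hθ hθ' fun x => (hhg x).symm.trans (hhg' x)
  · obtain ⟨e, he, hne⟩ := not_forall₂.1 hT
    exact ⟨alph_finite g, hg.ncard_alph_lt he hne⟩
  · exact hg.exists_renaming_of_length_eq hsol hsol₂ hlen hguniv hθ hhg hg₂ hθ₂ hhg₂

/-- Theorem on principal solutions. -/
theorem principal_solution_exists_unique {Ξ Sig : Type} [Fintype Ξ]
    (T : Set (List Ξ × List Ξ))
    (hT : (⋃ e ∈ T, {a | a ∈ e.1 ++ e.2}) = (Set.univ : Set Ξ))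
    (h : Ξ → List Sig) (hsol : IsSolution h T) :
    ∃ (Δ : Type) (g : Ξ → List Δ) (θ : Δ → List Sig),
      IsPrincipalSolution g T ∧
      (∀ a ∈ alph g, θ a ≠ []) ∧
      (∀ x, h x = (g x).flatMap θ) ∧
      -- uniqueness up to renaming of letters:
      (∀ (Δ' : Type) (g' : Ξ → List Δ') (θ' : Δ' → List Sig),
        IsPrincipalSolution g' T → (∀ a ∈ alph g', θ' a ≠ []) →
        (∀ x, h x = (g' x).flatMap θ') →
        ∃ ρ : Δ → Δ', Set.InjOn ρ (alph g) ∧ ρ '' alph g = alph g' ∧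
          (∀ x, g' x = (g x).map ρ) ∧
          (∀ a ∈ alph g, θ' (ρ a) = θ a)) ∧
      -- (i) if `T` is not trivial then `|alph g| < |alph T| = |Ξ|`:
      ((¬ ∀ e ∈ T, e.1 = e.2) → (alph g).Finite ∧ (alph g).ncard < Fintype.card Ξ) ∧
      -- (ii) solutions with the same length type have the same principal solution up to
      -- renaming, and the associated morphisms have the same length type:
      (∀ (Sig₂ Δ₂ : Type) (h₂ : Ξ → List Sig₂) (g₂ : Ξ → List Δ₂) (θ₂ : Δ₂ → List Sig₂),
        IsSolution h₂ T → (∀ x, (h x).length = (h₂ x).length) →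
        IsPrincipalSolution g₂ T → (∀ a ∈ alph g₂, θ₂ a ≠ []) →
        (∀ x, h₂ x = (g₂ x).flatMap θ₂) →
        ∃ ρ : Δ → Δ₂, Set.InjOn ρ (alph g) ∧ ρ '' alph g = alph g₂ ∧
          (∀ x, g₂ x = (g x).map ρ) ∧
          (∀ a ∈ alph g, (θ₂ (ρ a)).length = (θ a).length)) :=
  principal_solution_exists_unique_general T h hsol
end WordEquations
end

section
/- Let g be a principal solution of a system T of word equations in n unknowns. Then the rank of g equals the cardinality of alp(g). Moreover, if h = θ∘g for a morphism θ, then the rank of h is at most the rank of g. -/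
open scoped BigOperators

namespace WordEquations

/-!
A linear relation `Σ_a λ_a γ(g)_a = 0` says exactly that the weight `λ : Δ → ℚ` gives every
image `g(x)` weight zero. Cutting a word after each nonempty prefix of weight zero commutes
with concatenation of zero-weight words, so cutting every `g(x)` yields a solution `g'` over
the alphabet of pieces with `g = flatten ∘ g'`. Principality forces every piece to be a single
letter; as pieces have weight zero, `λ` vanishes on `alph g`. Hence the `γ(g)_a`, `a ∈ alph g`,
are linearly independent, the others vanish, and `rank g = |alph g|`. The inequality is
elementary: `γ(θ ∘ g)_b = Σ_a |θ(a)|_b γ(g)_a`.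
-/

section ZeroWeightFactors

variable {Δ M : Type*} [AddGroup M] (wt : Δ → M)

theorem sum_map_eq_zero_of_append {u w : List Δ} (hu : (u.map wt).sum = 0)
    (huw : ((u ++ w).map wt).sum = 0) : (w.map wt).sum = 0 := by
  rwa [List.map_append, List.sum_append, hu, zero_add] at huw

variable [DecidableEq M]

/-- `zeroWeightFactors wt w acc` cuts `acc ++ w` after every nonempty prefix of weight zero
that extends the pending factor `acc`. -/
def zeroWeightFactors : List Δ → List Δ → List (List Δ)
  | [], acc => if acc = [] then [] else [acc]
  | c :: w, acc =>
      if ((acc ++ [c]).map wt).sum = 0 then (acc ++ [c]) :: zeroWeightFactors w []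
      else zeroWeightFactors w (acc ++ [c])

theorem zeroWeightFactors_cons_of_eq_zero {c : Δ} {w acc : List Δ}
    (h : ((acc ++ [c]).map wt).sum = 0) :
    zeroWeightFactors wt (c :: w) acc = (acc ++ [c]) :: zeroWeightFactors wt w [] := by
  rw [zeroWeightFactors, if_pos h]

theorem zeroWeightFactors_cons_of_ne_zero {c : Δ} {w acc : List Δ}
    (h : ((acc ++ [c]).map wt).sum ≠ 0) :
    zeroWeightFactors wt (c :: w) acc = zeroWeightFactors wt w (acc ++ [c]) := by
  rw [zeroWeightFactors, if_neg h]

theorem flatten_zeroWeightFactors (w acc : List Δ) :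
    (zeroWeightFactors wt w acc).flatten = acc ++ w := by
  induction w generalizing acc with
  | nil => by_cases h : acc = [] <;> simp [zeroWeightFactors, h]
  | cons c w ih =>
    by_cases h : ((acc ++ [c]).map wt).sum = 0
    · simp [zeroWeightFactors_cons_of_eq_zero wt h, ih]
    · simp [zeroWeightFactors_cons_of_ne_zero wt h, ih]

theorem ne_nil_of_mem_zeroWeightFactors {w acc p : List Δ}
    (hp : p ∈ zeroWeightFactors wt w acc) : p ≠ [] := by
  induction w generalizing acc with
  | nil =>
    by_cases h : acc = []
    · simp [zeroWeightFactors, h] at hp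
    · simp only [zeroWeightFactors, h, if_false, List.mem_singleton] at hp
      exact hp ▸ h
  | cons c w ih =>
    by_cases h : ((acc ++ [c]).map wt).sum = 0
    · rw [zeroWeightFactors_cons_of_eq_zero wt h, List.mem_cons] at hp
      rcases hp with rfl | hp
      · simp
      · exact ih hp
    · rw [zeroWeightFactors_cons_of_ne_zero wt h] at hp
      exact ih hp

theorem sum_map_eq_zero_of_mem_zeroWeightFactors {w acc p : List Δ}
    (hw : ((acc ++ w).map wt).sum = 0) (hp : p ∈ zeroWeightFactors wt w acc) :
    (p.map wt).sum = 0 := by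
  induction w generalizing acc with
  | nil =>
    by_cases h : acc = []
    · simp [zeroWeightFactors, h] at hp
    · simp only [zeroWeightFactors, h, if_false, List.mem_singleton] at hp
      simpa [hp] using hw
  | cons c w ih =>
    rw [← List.singleton_append, ← List.append_assoc] at hw
    by_cases h : ((acc ++ [c]).map wt).sum = 0
    · rw [zeroWeightFactors_cons_of_eq_zero wt h, List.mem_cons] at hp
      rcases hp with rfl | hp
      · exact h
      · exact ih (sum_map_eq_zero_of_append wt h hw) hp
    · rw [zeroWeightFactors_cons_of_ne_zero wt h] at hp
      exact ih hw hp

/-- The condition on `acc` rules out a pending factor of weight zero, which would not be split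
off at the end of `w`. -/
theorem zeroWeightFactors_append {w acc : List Δ} (v : List Δ)
    (hacc : acc = [] ∨ (acc.map wt).sum ≠ 0) (hw : ((acc ++ w).map wt).sum = 0) :
    zeroWeightFactors wt (w ++ v) acc = zeroWeightFactors wt w acc ++ zeroWeightFactors wt v [] := by
  induction w generalizing acc with
  | nil =>
    obtain rfl : acc = [] := hacc.resolve_right (by simpa using hw)
    simp [zeroWeightFactors]
  | cons c w ih =>
    rw [← List.singleton_append, ← List.append_assoc] at hw
    rw [List.cons_append]
    by_cases h : ((acc ++ [c]).map wt).sum = 0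
    · rw [zeroWeightFactors_cons_of_eq_zero wt h, zeroWeightFactors_cons_of_eq_zero wt h,
        ih (Or.inl rfl) (by simpa using sum_map_eq_zero_of_append wt h hw), List.cons_append]
    · rw [zeroWeightFactors_cons_of_ne_zero wt h, zeroWeightFactors_cons_of_ne_zero wt h]
      exact ih (Or.inr h) hw

theorem zeroWeightFactors_flatMap {Ξ : Type*} (g : Ξ → List Δ)
    (hg : ∀ x, ((g x).map wt).sum = 0) (u : List Ξ) :
    zeroWeightFactors wt (u.flatMap g) [] = u.flatMap fun x => zeroWeightFactors wt (g x) [] := by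
  induction u with
  | nil => simp [zeroWeightFactors]
  | cons x u ih =>
    rw [List.flatMap_cons, List.flatMap_cons,
      zeroWeightFactors_append wt _ (Or.inl rfl) (by simpa using hg x), ih]

end ZeroWeightFactors

theorem IsPrincipalSolution.eqOn_zero_of_sum_map_eq_zero {Ξ : Type*} {Δ : Type} {M : Type*}
    [AddGroup M] [DecidableEq M] {g : Ξ → List Δ} {T : Set (List Ξ × List Ξ)}
    (hg : IsPrincipalSolution g T) (wt : Δ → M) (hwt : ∀ x, ((g x).map wt).sum = 0) :
    Set.EqOn wt 0 (alph g) := by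
  set g' : Ξ → List (List Δ) := fun x => zeroWeightFactors wt (g x) []
  have hsol : IsSolution g' T := fun e he => by
    simp only [g', ← zeroWeightFactors_flatMap wt g hwt, hg.1 e he]
  have hren : IsRenamingOn id (alph g') := by
    refine hg.2 (List Δ) g' id hsol ?_ fun x => by simp [g', flatten_zeroWeightFactors]
    intro p hp
    obtain ⟨x, hx⟩ := Set.mem_iUnion.1 hp
    exact ne_nil_of_mem_zeroWeightFactors wt hx
  intro a ha
  obtain ⟨x, hx⟩ := Set.mem_iUnion.1 ha
  have hx' : a ∈ (g' x).flatten := by simpa [g', flatten_zeroWeightFactors] using hx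
  obtain ⟨p, hp, hap⟩ := List.mem_flatten.1 hx'
  obtain ⟨b, rfl⟩ := hren.1 p (Set.mem_iUnion.2 ⟨x, hp⟩)
  obtain rfl := List.mem_singleton.1 hap
  simpa using sum_map_eq_zero_of_mem_zeroWeightFactors wt (by simpa using hwt x) hp

theorem sum_map_eq_sum_count_nsmul {α M : Type*} [DecidableEq α] [AddCommMonoid M]
    {w : List α} {S : Finset α} (hS : w.toFinset ⊆ S) (f : α → M) :
    (w.map f).sum = ∑ a ∈ S, w.count a • f a := by
  rw [Finset.sum_list_map_count]
  refine Finset.sum_subset hS fun a _ ha => ?_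
  rw [List.count_eq_zero_of_not_mem (by simpa using ha), zero_smul]

section Rank

variable {n : ℕ} {Δ : Type*} [DecidableEq Δ]

def letters (g : Fin n → List Δ) : Finset Δ := Finset.univ.biUnion fun j => (g j).toFinset

theorem toFinset_subset_letters (g : Fin n → List Δ) (j : Fin n) :
    (g j).toFinset ⊆ letters g :=
  Finset.subset_biUnion_of_mem (fun j => (g j).toFinset) (Finset.mem_univ j)

theorem gamVec_flatMap {Sig : Type*} [DecidableEq Sig] (g : Fin n → List Δ)
    (θ : Δ → List Sig) (b : Sig) :
    gamVec (fun j => (g j).flatMap θ) b = ∑ a ∈ letters g, ((θ a).count b : ℚ) • gamVec g a := by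
  ext j
  simp only [gamVec, Finset.sum_apply, Pi.smul_apply, smul_eq_mul, List.count_flatMap,
    sum_map_eq_sum_count_nsmul (toFinset_subset_letters g j)]
  push_cast
  exact Finset.sum_congr rfl fun a _ => by simp [mul_comm]

theorem gammaSpace_flatMap_le {Sig : Type*} [DecidableEq Sig] (g : Fin n → List Δ)
    (θ : Δ → List Sig) : GammaSpace (fun j => (g j).flatMap θ) ≤ GammaSpace g := by
  refine Submodule.span_le.2 <| Set.range_subset_iff.2 fun b => ?_
  rw [gamVec_flatMap]
  exact Submodule.sum_mem _ fun a _ => Submodule.smul_mem _ _ (Submodule.subset_span ⟨a, rfl⟩)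

theorem gamVec_eq_zero_of_notMem_alph {g : Fin n → List Δ} {a : Δ} (ha : a ∉ alph g) :
    gamVec g a = 0 := by
  ext j
  have : a ∉ g j := fun h => ha (Set.mem_iUnion.2 ⟨j, h⟩)
  simp [gamVec, List.count_eq_zero_of_not_mem this]

theorem gammaSpace_eq_span_image_alph (g : Fin n → List Δ) :
    GammaSpace g = Submodule.span ℚ (gamVec g '' alph g) := by
  refine le_antisymm (Submodule.span_le.2 ?_) (Submodule.span_mono (Set.image_subset_range _ _))
  rintro _ ⟨a, rfl⟩
  by_cases ha : a ∈ alph g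
  · exact Submodule.subset_span ⟨a, ha, rfl⟩
  · simp [gamVec_eq_zero_of_notMem_alph ha]

theorem linearCombination_gamVec_apply (g : Fin n → List Δ) (l : Δ →₀ ℚ) (j : Fin n) :
    Finsupp.linearCombination ℚ (gamVec g) l j = ((g j).map l).sum := by
  rw [Finsupp.linearCombination_apply,
    Finsupp.sum_of_support_subset l Finset.subset_union_left (fun a c => c • gamVec g a)
      (fun _ _ => zero_smul ℚ _),
    sum_map_eq_sum_count_nsmul Finset.subset_union_right, Finset.sum_apply]
  exact Finset.sum_congr rfl fun a _ => by simp [gamVec, mul_comm]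

end Rank

theorem IsPrincipalSolution.linearIndepOn_gamVec {n : ℕ} {Δ : Type} [DecidableEq Δ]
    {g : Fin n → List Δ} {T : Set (List (Fin n) × List (Fin n))} (hg : IsPrincipalSolution g T) :
    LinearIndepOn ℚ (gamVec g) (alph g) := by
  refine linearIndepOn_iff.2 fun l hl hcomb => Finsupp.ext fun a => ?_
  by_cases ha : a ∈ alph g
  · refine hg.eqOn_zero_of_sum_map_eq_zero l (fun x => ?_) ha
    rw [← linearCombination_gamVec_apply, hcomb, Pi.zero_apply]
  · exact Finsupp.notMem_support_iff.1 fun h => ha (hl h)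

theorem IsPrincipalSolution.morphRank_eq_ncard_alph {n : ℕ} {Δ : Type} [DecidableEq Δ]
    {g : Fin n → List Δ} {T : Set (List (Fin n) × List (Fin n))} (hg : IsPrincipalSolution g T) :
    morphRank g = (alph g).ncard := by
  rw [morphRank, gammaSpace_eq_span_image_alph, Module.finrank, ← Cardinal.toNat_toENat,
    toENat_rank_span_set hg.linearIndepOn_gamVec, Set.ncard_def]

theorem rank_of_principal_solution_general {n : ℕ} {Δ Sig : Type}
    [DecidableEq Δ] [DecidableEq Sig]
    (T : Set (List (Fin n) × List (Fin n)))
    (g : Fin n → List Δ) (hg : IsPrincipalSolution g T)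
    (θ : Δ → List Sig) (h : Fin n → List Sig)
    (hh : ∀ x, h x = (g x).flatMap θ) :
    morphRank g = (alph g).ncard ∧ morphRank h ≤ morphRank g := by
  obtain rfl : h = fun x => (g x).flatMap θ := funext hh
  exact ⟨hg.morphRank_eq_ncard_alph, Submodule.finrank_mono (gammaSpace_flatMap_le g θ)⟩

/-- the rank of a principal solution `g` equals `|alph g|`, and the rank of
any `h = θ ∘ g` is at most the rank of `g`. -/
theorem rank_of_principal_solution {n : ℕ} {Δ Sig : Type}
    [Fintype Δ] [DecidableEq Δ] [Fintype Sig] [DecidableEq Sig]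
    (T : Set (List (Fin n) × List (Fin n)))
    (g : Fin n → List Δ) (hg : IsPrincipalSolution g T)
    (θ : Δ → List Sig) (h : Fin n → List Sig)
    (hh : ∀ x, h x = (g x).flatMap θ) :
    morphRank g = (alph g).ncard ∧ morphRank h ≤ morphRank g :=
  rank_of_principal_solution_general T g hg θ h hh

end WordEquations
end

section
/- If h : {x₁,…,xₙ}* → {a₁,…,a_k}* is a morphism of rank r, then the set L_h = { L(θ_α ∘ h) : α ∈ ℕ₀^k } ⊆ ℤⁿ has rank r; that is, the ℚ-span of L_h has dimension r and L_h is not contained in any finite union of (r−1)-dimensional ℚ-subspaces of its span. -/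
open scoped BigOperators

namespace WordEquations

/-!
The length types are the images of the natural points `α ∈ ℕᵏ` under the linear map
`T : ℚᵏ → ℚⁿ`, `β ↦ Σₐ βₐ γ(h)ₐ`; since the natural points span `ℚᵏ`, they span `range T = Γ_h`.
A subspace of codimension one in `range T` pulls back to a proper subspace of `ℚᵏ`, which lies
in the kernel of a nonzero functional `f`. Along the moment curve `t ↦ (1, t, …, t^{k-1})` such
an `f` is a nonzero polynomial in `t`, so finitely many of them have only finitely many common
zeros, and some natural point `(1, m, …, m^{k-1})` escapes all the subspaces.
-/

open Polynomial

section MomentCurve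

variable {K : Type*} [Field K] {k : ℕ}

variable (K k) in
def natPoints : Set (Fin k → K) := Set.range fun α : Fin k → ℕ => fun j => (α j : K)

theorem span_natPoints : Submodule.span K (natPoints K k) = ⊤ := by
  rw [eq_top_iff, ← (Pi.basisFun K (Fin k)).span_eq, Submodule.span_le]
  rintro _ ⟨j, rfl⟩
  exact Submodule.subset_span ⟨Pi.single j 1, by ext; simp [Pi.single_apply]⟩

noncomputable def momentPoly (f : (Fin k → K) →ₗ[K] K) : K[X] :=
  ∑ j : Fin k, C (f (Pi.single j 1)) * X ^ (j : ℕ)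

theorem eval_momentPoly (f : (Fin k → K) →ₗ[K] K) (t : K) :
    (momentPoly f).eval t = f (fun j => t ^ (j : ℕ)) := by
  conv_rhs => rw [← Finset.univ_sum_single (fun j : Fin k => t ^ (j : ℕ))]
  simp only [momentPoly, eval_finsetSum, eval_mul, eval_C, eval_pow, eval_X, map_sum]
  refine Finset.sum_congr rfl fun j _ => ?_
  rw [mul_comm, ← smul_eq_mul, ← map_smul, ← Pi.single_smul', smul_eq_mul, mul_one]

theorem coeff_momentPoly (f : (Fin k → K) →ₗ[K] K) (j : Fin k) :
    (momentPoly f).coeff j = f (Pi.single j 1) := by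
  simp [momentPoly, coeff_X_pow, Fin.val_inj]

theorem momentPoly_ne_zero {f : (Fin k → K) →ₗ[K] K} (hf : f ≠ 0) : momentPoly f ≠ 0 := by
  contrapose! hf
  refine (Pi.basisFun K (Fin k)).ext fun j => ?_
  simp [← coeff_momentPoly, hf]

theorem exists_nat_forall_apply_moment_ne_zero [CharZero K] {ι : Type*} (s : Finset ι)
    (f : ι → (Fin k → K) →ₗ[K] K) (hf : ∀ i ∈ s, f i ≠ 0) :
    ∃ m : ℕ, ∀ i ∈ s, f i (fun j => (m : K) ^ (j : ℕ)) ≠ 0 := by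
  have hP : ∏ i ∈ s, momentPoly (f i) ≠ 0 :=
    Finset.prod_ne_zero_iff.mpr fun i hi => momentPoly_ne_zero (hf i hi)
  obtain ⟨_, ⟨m, rfl⟩, hm⟩ := ((Set.infinite_range_of_injective Nat.cast_injective).sdiff
    (finite_setOfPred_isRoot hP)).nonempty
  refine ⟨m, fun i hi hi0 => hm ?_⟩
  rw [← eval_momentPoly] at hi0
  simpa [eval_prod] using Finset.prod_eq_zero hi hi0

theorem exists_mem_natPoints_forall_notMem [CharZero K] {ι : Type*} (s : Finset ι)
    (W : ι → Submodule K (Fin k → K)) (hW : ∀ i ∈ s, W i ≠ ⊤) :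
    ∃ v ∈ natPoints K k, ∀ i ∈ s, v ∉ W i := by
  choose! f hf0 hfW using fun i (hi : i ∈ s) =>
    (W i).exists_le_ker_of_lt_top (lt_top_iff_ne_top.mpr (hW i hi))
  obtain ⟨m, hm⟩ := exists_nat_forall_apply_moment_ne_zero s f hf0
  refine ⟨_, ⟨fun j => m ^ (j : ℕ), rfl⟩, fun i hi hmem => hm i hi ?_⟩
  simpa using hfW i hi hmem

end MomentCurve

theorem hasRank_image_natPoints {n k : ℕ} (T : (Fin k → ℚ) →ₗ[ℚ] (Fin n → ℚ)) :
    HasRank (T '' natPoints ℚ k) (Module.finrank ℚ (LinearMap.range T)) := by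
  have hspan : Submodule.span ℚ (T '' natPoints ℚ k) = LinearMap.range T := by
    rw [Submodule.span_image, span_natPoints, Submodule.map_top]
  refine ⟨by rw [hspan], fun V hV hcover => ?_⟩
  have hproper : ∀ W ∈ V, W.comap T ≠ ⊤ := by
    intro W hW htop
    have := Submodule.finrank_mono (LinearMap.range_le_iff_comap.mpr htop)
    have := (hV W hW).2
    omega
  obtain ⟨_, ⟨α, rfl⟩, hα⟩ := exists_mem_natPoints_forall_notMem V (W := (·.comap T)) hproper
  obtain ⟨W, hW, hmem⟩ := Set.mem_iUnion₂.mp (hcover ⟨_, ⟨α, rfl⟩, rfl⟩)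
  exact hα W hW hmem

theorem natCast_powLenType_eq_linearCombination {n k : ℕ} (α : Fin k → ℕ)
    (h : Fin n → List (Fin k)) :
    (fun x => (powLenType α h x : ℚ)) =
      Fintype.linearCombination ℚ (gamVec h) (fun a => (α a : ℚ)) := by
  ext x
  simp [powLenType, gamVec, Fintype.linearCombination_apply]

theorem lengthTypes_eq_image_natPoints {n k : ℕ} (h : Fin n → List (Fin k)) :
    {v : Fin n → ℚ | ∃ α : Fin k → ℕ, ∀ x, v x = ((powLenType α h x : ℕ) : ℚ)} =
      Fintype.linearCombination ℚ (gamVec h) '' natPoints ℚ k := by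
  rw [natPoints, ← Set.range_comp]
  ext v
  simp only [Set.mem_range, Function.comp_def, ← natCast_powLenType_eq_linearCombination,
    funext_iff, eq_comm]
  rfl

theorem morphRank_eq_finrank_range {n : ℕ} {Δ : Type*} [Fintype Δ] [DecidableEq Δ]
    (h : Fin n → List Δ) :
    morphRank h = Module.finrank ℚ (LinearMap.range (Fintype.linearCombination ℚ (gamVec h))) := by
  rw [Fintype.range_linearCombination]
  rfl

/-- for a morphism `h` of rank `r`, the set
`L_h = { L(θ_α ∘ h) : α ∈ ℕ₀^k }` has rank `r`. -/
theorem hasRank_lengthTypes {n k : ℕ} (h : Fin n → List (Fin k)) (r : ℕ)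
    (hr : morphRank h = r) :
    HasRank {v : Fin n → ℚ | ∃ α : Fin k → ℕ, ∀ x, v x = ((powLenType α h x : ℕ) : ℚ)} r := by
  rw [lengthTypes_eq_image_natPoints, ← hr, morphRank_eq_finrank_range]
  exact hasRank_image_natPoints _

end WordEquations
end

section
/- If ℒ = ⋃_{i≤k} ℒᵢ ⊆ ℚⁿ is a finite union of sets such that ℒ has rank r and each ℒᵢ satisfies ℒᵢℕ ⊆ ℒᵢ, then there exists an index i such that ℒᵢ has rank r. -/
open scoped BigOperators

namespace WordEquations

/-!
If no `L i` had rank `r`, each `L i` would be covered by finitely many `(r-1)`-dimensional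
subspaces of `span (⋃ i, L i)`: when `span (L i)` has full dimension `r` this is exactly the
failure of the covering condition, and otherwise `span (L i)` itself fits inside a single
`(r-1)`-dimensional subspace. Since there are finitely many `i`, these covers together cover
`⋃ i, L i`, contradicting its rank.
-/

open Module Submodule

section Covering

variable {K E : Type*} [DivisionRing K] [AddCommGroup E] [Module K E]

theorem _root_.Submodule.exists_le_le_finrank_eq [Module.Finite K E] {W₀ U : Submodule K E}
    (hle : W₀ ≤ U) {m : ℕ} (hW₀ : finrank K W₀ ≤ m) (hU : m ≤ finrank K U) :
    ∃ W : Submodule K E, W₀ ≤ W ∧ W ≤ U ∧ finrank K W = m := by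
  induction m, hW₀ using Nat.le_induction with
  | base => exact ⟨W₀, le_rfl, hle, rfl⟩
  | succ m _ ih =>
    obtain ⟨W, hW₀W, hWU, hW⟩ := ih (Nat.le_of_succ_le hU)
    have hlt : W < U := lt_of_le_of_ne hWU (by rintro rfl; omega)
    obtain ⟨x, hxU, hxW⟩ := SetLike.exists_of_lt hlt
    refine ⟨W ⊔ span K {x}, hW₀W.trans le_sup_left,
      sup_le hWU ((span_singleton_le_iff_mem x U).mpr hxU), ?_⟩
    rw [finrank_sup_span_singleton hxW, hW]

/-- For `r = 0` no subspace qualifies, so only `∅` is covered. -/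
def CoveredBySubspaces (U : Submodule K E) (r : ℕ) (M : Set E) : Prop :=
  ∃ V : Finset (Submodule K E), (∀ W ∈ V, W ≤ U ∧ finrank K W + 1 = r) ∧
    M ⊆ ⋃ W ∈ V, (W : Set E)

theorem CoveredBySubspaces.mono {U U' : Submodule K E} {r : ℕ} {M N : Set E}
    (h : CoveredBySubspaces U r N) (hU : U ≤ U') (hMN : M ⊆ N) :
    CoveredBySubspaces U' r M := by
  obtain ⟨V, hV, hNV⟩ := h
  exact ⟨V, fun W hW => ⟨(hV W hW).1.trans hU, (hV W hW).2⟩, hMN.trans hNV⟩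

theorem coveredBySubspaces_iUnion {ι : Type*} [Finite ι] {U : Submodule K E} {r : ℕ}
    {L : ι → Set E} (h : ∀ i, CoveredBySubspaces U r (L i)) :
    CoveredBySubspaces U r (⋃ i, L i) := by
  classical
  have := Fintype.ofFinite ι
  choose V hV hLV using h
  refine ⟨Finset.univ.biUnion V, fun W hW => ?_, Set.iUnion_subset fun i => (hLV i).trans ?_⟩
  · obtain ⟨i, -, hWi⟩ := Finset.mem_biUnion.mp hW
    exact hV i W hWi
  · exact Set.biUnion_subset_biUnion_left fun W hW =>
      Finset.mem_biUnion.mpr ⟨i, Finset.mem_univ i, hW⟩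

theorem coveredBySubspaces_of_finrank_span_lt [Module.Finite K E] {U : Submodule K E}
    {M : Set E} (hMU : span K M ≤ U)
    (hlt : finrank K (span K M) < finrank K U) :
    CoveredBySubspaces U (finrank K U) M := by
  obtain ⟨W, hMW, hWU, hW⟩ :=
    exists_le_le_finrank_eq hMU (m := finrank K U - 1) (by omega) (by omega)
  refine ⟨{W}, fun W' hW' => ?_, fun x hx => ?_⟩
  · rw [Finset.mem_singleton.mp hW']
    exact ⟨hWU, by omega⟩
  · exact Set.mem_biUnion (Finset.mem_singleton_self W) (hMW (subset_span hx))

end Covering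

theorem hasRank_iff {n r : ℕ} {M : Set (Fin n → ℚ)} :
    HasRank M r ↔ finrank ℚ (span ℚ M) = r ∧
      ¬ CoveredBySubspaces (span ℚ M) r M := by
  simp only [HasRank, CoveredBySubspaces, not_exists, not_and]

theorem coveredBySubspaces_of_not_hasRank {n : ℕ} {M N : Set (Fin n → ℚ)} (hMN : M ⊆ N)
    (h : ¬ HasRank M (finrank ℚ (span ℚ N))) :
    CoveredBySubspaces (span ℚ N) (finrank ℚ (span ℚ N)) M := by
  have hspan : span ℚ M ≤ span ℚ N := span_mono hMN
  rcases (finrank_mono hspan).lt_or_eq with hlt | heq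
  · exact coveredBySubspaces_of_finrank_span_lt hspan hlt
  · rw [hasRank_iff, not_and_not_right] at h
    exact (h heq).mono hspan subset_rfl

theorem hasRank_of_iUnion_general {n k r : ℕ} (L : Fin k → Set (Fin n → ℚ))
    (hrank : HasRank (⋃ i, L i) r) :
    ∃ i, HasRank (L i) r := by
  obtain ⟨rfl, hnot⟩ := hasRank_iff.mp hrank
  by_contra! h
  exact hnot (coveredBySubspaces_iUnion fun i =>
    coveredBySubspaces_of_not_hasRank (Set.subset_iUnion L i) (h i))

/-- if a finite union `⋃ i, L i` has rank `r` and each `L i` is closed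
under `ℕ`-sums (`Lᵢℕ ⊆ Lᵢ`), then some `L i` has rank `r`. -/
theorem hasRank_of_iUnion {n k r : ℕ} (L : Fin k → Set (Fin n → ℚ))
    (hrank : HasRank (⋃ i, L i) r)
    (hN : ∀ i, natSums (L i) ⊆ L i) :
    ∃ i, HasRank (L i) r :=
  hasRank_of_iUnion_general L hrank

end WordEquations
end

section
/- Let E be a word equation in n unknowns. Then: (1) 𝒮_E = 0 if and only if E is trivial (i.e., its two sides are equal words); and (2) if 𝒮_E ≠ 0 and β ∈ ℕ₀ⁿ satisfies 𝒮_E(β) = 0, then at least two coordinates of β are zero. -/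
/-!
Write `s_w(β) = (evalAt β (sideS w j))_j`. Since `sideS (a :: w) j = [a = j] + X_a · sideS w j`,
the constant coefficients of `s_{a :: w}(β)` are nonnegative and at least `1` at `j = a`, while
at `j ≠ a` they vanish as soon as `β a ≠ 0`. Hence if `β` has at most one zero coordinate, two
nonempty words with `s_u(β) = s_v(β)` start with the same letter; cancelling it and the factor
`x^{β a}` shows by induction that `w ↦ s_w(β)` is injective. Taking `β = 1` gives injectivity of
`w ↦ (sideS w j)_j` itself, which is part (1), and part (2) follows from the injectivity for
general `β`.
-/

open scoped BigOperators

namespace WordEquations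

open Polynomial

variable {n : ℕ}

lemma sideS_nil (j : Fin n) : sideS [] j = 0 := by
  simp [sideS]

lemma sideS_cons (a : Fin n) (w : List (Fin n)) (j : Fin n) :
    sideS (a :: w) j = (if a = j then 1 else 0) + MvPolynomial.X a * sideS w j := by
  change (∑ i : Fin (w.length + 1), if (a :: w).get i = j
    then ((List.take (i : ℕ) (a :: w)).map MvPolynomial.X).prod else 0) = _
  rw [Fin.sum_univ_succ, sideS, Finset.mul_sum]
  congr 1
  refine Finset.sum_congr rfl fun i _ => ?_
  simp [List.take_succ_cons, mul_ite]

lemma evalAt_sideS_cons (β : Fin n → ℕ) (a : Fin n) (w : List (Fin n)) (j : Fin n) :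
    evalAt β (sideS (a :: w) j) = (if a = j then 1 else 0) + X ^ β a * evalAt β (sideS w j) := by
  rw [sideS_cons]
  simp only [evalAt, MvPolynomial.eval₂_add, MvPolynomial.eval₂_mul, MvPolynomial.eval₂_X]
  congr 1
  split_ifs <;> simp

lemma coeff_evalAt_sideS_nonneg (β : Fin n → ℕ) (w : List (Fin n)) (j : Fin n) (k : ℕ) :
    0 ≤ (evalAt β (sideS w j)).coeff k := by
  induction w generalizing k with
  | nil => simp [sideS_nil, evalAt]
  | cons a w ih =>
    rw [evalAt_sideS_cons, coeff_add, mul_comm, coeff_mul_X_pow']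
    refine add_nonneg ?_ ?_
    · split_ifs <;> simp [coeff_one, ite_nonneg]
    · split_ifs
      exacts [ih _, le_rfl]

lemma coeff_zero_evalAt_sideS_cons (β : Fin n → ℕ) (a : Fin n) (w : List (Fin n)) (j : Fin n) :
    (evalAt β (sideS (a :: w) j)).coeff 0
      = (if a = j then 1 else 0) + if β a = 0 then (evalAt β (sideS w j)).coeff 0 else 0 := by
  rw [evalAt_sideS_cons, coeff_add, mul_comm, coeff_mul_X_pow']
  simp only [Nat.le_zero, Nat.zero_sub]
  split_ifs <;> simp

lemma one_le_coeff_zero_evalAt_sideS_cons_self (β : Fin n → ℕ) (a : Fin n) (w : List (Fin n)) :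
    1 ≤ (evalAt β (sideS (a :: w) a)).coeff 0 := by
  rw [coeff_zero_evalAt_sideS_cons, if_pos rfl, le_add_iff_nonneg_right]
  split_ifs
  exacts [coeff_evalAt_sideS_nonneg β w a 0, le_rfl]

lemma coeff_zero_evalAt_sideS_cons_of_ne {β : Fin n → ℕ} {a j : Fin n} (w : List (Fin n))
    (haj : a ≠ j) (ha : β a ≠ 0) : (evalAt β (sideS (a :: w) j)).coeff 0 = 0 := by
  rw [coeff_zero_evalAt_sideS_cons, if_neg haj, if_neg ha, add_zero]

lemma evalAt_sideS_ne_of_nil_cons (β : Fin n → ℕ) (a : Fin n) (w : List (Fin n)) :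
    evalAt β (sideS [] a) ≠ evalAt β (sideS (a :: w) a) := fun h => by
  have := one_le_coeff_zero_evalAt_sideS_cons_self β a w
  rw [← h, sideS_nil] at this
  simp [evalAt] at this

lemma head_eq_of_evalAt_sideS_eq {β : Fin n → ℕ} (hβ : {i | β i = 0}.Subsingleton)
    {a b : Fin n} {u v : List (Fin n)}
    (h : ∀ j, evalAt β (sideS (a :: u) j) = evalAt β (sideS (b :: v) j)) : a = b := by
  by_contra hab
  have ha := one_le_coeff_zero_evalAt_sideS_cons_self β a u
  have hb := one_le_coeff_zero_evalAt_sideS_cons_self β b v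
  by_cases hβb : β b = 0
  · have hβa : β a ≠ 0 := fun hβa => hab (hβ hβa hβb)
    rw [← h, coeff_zero_evalAt_sideS_cons_of_ne u hab hβa] at hb
    norm_num at hb
  · rw [h, coeff_zero_evalAt_sideS_cons_of_ne v (Ne.symm hab) hβb] at ha
    exact absurd ha (by norm_num)

theorem evalAt_sideS_injective {β : Fin n → ℕ} (hβ : {i | β i = 0}.Subsingleton) :
    Function.Injective fun w j => evalAt β (sideS w j) := by
  intro u
  induction u with
  | nil =>
    rintro (_ | ⟨b, v⟩) h
    · rfl
    · exact absurd (congrFun h b) (evalAt_sideS_ne_of_nil_cons β b v)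
  | cons a u ih =>
    rintro (_ | ⟨b, v⟩) h
    · exact absurd (congrFun h a).symm (evalAt_sideS_ne_of_nil_cons β a u)
    · obtain rfl := head_eq_of_evalAt_sideS_eq hβ (congrFun h)
      refine congrArg _ (ih <| funext fun j => ?_)
      have hj := congrFun h j
      simp only [evalAt_sideS_cons] at hj
      exact mul_left_cancel₀ (pow_ne_zero _ X_ne_zero) (add_left_cancel hj)

theorem sideS_injective : Function.Injective fun (w : List (Fin n)) j => sideS w j :=
  fun u v h => evalAt_sideS_injective (β := fun _ => 1) (by simp)
    (funext fun j => congrArg (evalAt _) (congrFun h j))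

/-- `𝒮_E = 0` iff `E` is trivial, and if `𝒮_E ≠ 0` and `𝒮_E(β) = 0`
then at least two coordinates of `β` are zero. -/
theorem SE_zero_iff_trivial {n : ℕ} (E : List (Fin n) × List (Fin n)) :
    ((∀ j, SE E j = 0) ↔ E.1 = E.2) ∧
    ((¬ ∀ j, SE E j = 0) → ∀ β : Fin n → ℕ,
      (∀ j, evalAt β (SE E j) = 0) → ∃ i j, i ≠ j ∧ β i = 0 ∧ β j = 0) := by
  have hSE : (∀ j, SE E j = 0) ↔ E.1 = E.2 := by
    simp only [SE, sub_eq_zero]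
    exact ⟨fun h => sideS_injective (funext h), fun h => by simp [h]⟩
  refine ⟨hSE, fun hne β hβ => ?_⟩
  by_contra hcon
  have hsub : {i | β i = 0}.Subsingleton := fun i hi j hj => by
    by_contra hij
    exact hcon ⟨i, j, hij, hi, hj⟩
  refine hne (hSE.2 (evalAt_sideS_injective hsub (funext fun j => ?_)))
  simpa only [SE, evalAt, MvPolynomial.eval₂_sub, sub_eq_zero] using hβ j

end WordEquations
end

section
/- Let λ ∈ ℤⁿ ∖ {0} have coprime coefficients and let {γ₁,…,γ_{n−1}} ⊆ 𝒩(λ) be linearly independent over ℚ. If α, β ∈ ℕ₀ⁿ satisfy (X^α − X^β)(γᵢ) = 0 for each i = 1,…,n−1, then X^{λ⁺} − X^{λ⁻} divides X^α − X^β in ℤ[X₁,…,Xₙ]. -/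
/-!
Since `x` is not a root of unity in `ℚ(x)`, the hypothesis says `(α - β) · γᵢ = 0` for all `i`.
The `γᵢ` span the hyperplane `𝒩(λ)`, whose common orthogonal is the line `ℚλ`, so `α - β = qλ`,
and `q` is an integer `k` because the entries of `λ` are coprime. For `k ≥ 0` and
`μ = min(α, β)` this gives `X^α - X^β = X^μ ((X^{λ⁺})^k - (X^{λ⁻})^k)`, a multiple of
`X^{λ⁺} - X^{λ⁻}`; for `k < 0` swap `α` and `β`.
-/

open scoped BigOperators

open Polynomial in
theorem zpow_algebraMap_X_injective {R K : Type*} [CommRing R] [Nontrivial R] [Field K]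
    [Algebra R[X] K] [IsFractionRing R[X] K] :
    Function.Injective fun k : ℤ => algebraMap R[X] K X ^ k := by
  have hinj := IsFractionRing.injective R[X] K
  have hX : algebraMap R[X] K X ≠ 0 := (map_ne_zero_iff _ hinj).mpr X_ne_zero
  have hu : ¬IsOfFinOrder (Units.mk0 _ hX) := by
    rw [isOfFinOrder_iff_pow_eq_one]
    rintro ⟨m, hm, hXm⟩
    have : (X : R[X]) ^ m = 1 := hinj (by simpa [Units.ext_iff] using hXm)
    simpa [hm.ne'] using congrArg natDegree this
  intro a b hab
  exact injective_zpow_iff_not_isOfFinOrder.mpr hu (Units.ext (by simpa using hab))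

theorem mem_span_singleton_of_dotProduct_eq_zero {K ι m : Type*} [Field K] [Fintype ι]
    [Fintype m] {γ : ι → m → K} (hγ : LinearIndependent K γ)
    (hcard : Fintype.card m ≤ Fintype.card ι + 1) {l v : m → K} (hl : l ≠ 0)
    (hlγ : ∀ i, l ⬝ᵥ γ i = 0) (hvγ : ∀ i, v ⬝ᵥ γ i = 0) : v ∈ K ∙ l := by
  have mem_ker : ∀ w : m → K, (∀ i, w ⬝ᵥ γ i = 0) → w ∈ LinearMap.ker (Matrix.of γ).mulVecLin :=
    fun w hw => by
      ext i
      simpa [Matrix.mulVec, dotProduct_comm] using hw i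
  have hW : Module.finrank K (LinearMap.ker (Matrix.of γ).mulVecLin) ≤ 1 := by
    have := LinearMap.finrank_range_add_finrank_ker (Matrix.of γ).mulVecLin
    have hrank : (Matrix.of γ).rank = Fintype.card ι := LinearIndependent.rank_matrix hγ
    rw [Matrix.rank] at hrank
    simp only [Module.finrank_fintype_fun_eq_card] at this
    omega
  have hlW : K ∙ l = LinearMap.ker (Matrix.of γ).mulVecLin :=
    Submodule.eq_of_le_of_finrank_le ((Submodule.span_singleton_le_iff_mem _ _).mpr (mem_ker l hlγ))
      (by rw [finrank_span_singleton hl]; exact hW)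
  exact hlW ▸ mem_ker v hvγ

theorem Rat.den_dvd_of_mul_eq {q : ℚ} {a b : ℤ} (h : q * a = b) : (q.den : ℤ) ∣ a := by
  rcases eq_or_ne a 0 with rfl | ha
  · exact dvd_zero _
  have hq : q = Rat.divInt b a := by
    rw [Rat.divInt_eq_div, ← h]
    field_simp
  exact hq ▸ Rat.den_dvd b a

theorem Rat.exists_int_eq_of_mul_eq {ι : Type*} {s : Finset ι} {l w : ι → ℤ}
    (hl : s.gcd l = 1) {q : ℚ} (h : ∀ t ∈ s, q * l t = w t) : ∃ k : ℤ, q = k := by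
  have hden : (q.den : ℤ) ∣ 1 := hl ▸ Finset.dvd_gcd fun t ht => Rat.den_dvd_of_mul_eq (h t ht)
  have hq : q.den = 1 := by exact_mod_cast Int.eq_one_of_dvd_one (by positivity) hden
  exact ⟨q.num, (Rat.coe_int_num_of_den_eq_one hq).symm⟩

theorem Nat.eq_min_add_mul_toNat_of_sub_eq_mul {a b k : ℕ} {l : ℤ} (h : (a : ℤ) - b = k * l) :
    a = min a b + k * l.toNat ∧ b = min a b + k * (-l).toNat := by
  obtain ⟨p, rfl | rfl⟩ := Int.eq_nat_or_neg l
  · simp only [Int.toNat_natCast, Int.toNat_neg_natCast, mul_zero, add_zero]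
    have : (a : ℤ) = b + (k * p : ℕ) := by push_cast; linarith
    omega
  · simp only [Int.toNat_natCast, Int.toNat_neg_natCast, neg_neg, mul_zero, add_zero]
    have : (b : ℤ) = a + (k * p : ℕ) := by push_cast; linarith
    omega

namespace WordEquations

theorem Xpow_add {n : ℕ} (a b : Fin n → ℕ) : Xpow (a + b) = Xpow a * Xpow b := by
  simp [Xpow, pow_add, Finset.prod_mul_distrib]

theorem Xpow_smul {n : ℕ} (k : ℕ) (a : Fin n → ℕ) : Xpow (k • a) = Xpow a ^ k := by
  simp only [Xpow, ← Finset.prod_pow, ← pow_mul]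
  exact Finset.prod_congr rfl fun i _ => by simp [mul_comm]

theorem Xpow_sub_Xpow_dvd_of_sub_eq_natCast_mul {n : ℕ} (lam : Fin n → ℤ) (k : ℕ)
    {α β : Fin n → ℕ} (h : ∀ t, (α t : ℤ) - β t = k * lam t) :
    (Xpow (lamPos lam) - Xpow (lamNeg lam)) ∣ (Xpow α - Xpow β) := by
  have hα : Xpow α = Xpow (α ⊓ β) * Xpow (lamPos lam) ^ k := by
    rw [← Xpow_smul, ← Xpow_add]
    exact congrArg Xpow (funext fun t => (Nat.eq_min_add_mul_toNat_of_sub_eq_mul (h t)).1)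
  have hβ : Xpow β = Xpow (α ⊓ β) * Xpow (lamNeg lam) ^ k := by
    rw [← Xpow_smul, ← Xpow_add]
    exact congrArg Xpow (funext fun t => (Nat.eq_min_add_mul_toNat_of_sub_eq_mul (h t)).2)
  rw [hα, hβ, ← mul_sub]
  exact (sub_dvd_pow_sub_pow _ _ k).mul_left _

theorem Xpow_sub_Xpow_dvd_of_sub_eq_mul {n : ℕ} (lam : Fin n → ℤ) (k : ℤ)
    {α β : Fin n → ℕ} (h : ∀ t, (α t : ℤ) - β t = k * lam t) :
    (Xpow (lamPos lam) - Xpow (lamNeg lam)) ∣ (Xpow α - Xpow β) := by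
  obtain ⟨m, rfl | rfl⟩ := Int.eq_nat_or_neg k
  · exact Xpow_sub_Xpow_dvd_of_sub_eq_natCast_mul lam m h
  · refine dvd_sub_comm.mp (Xpow_sub_Xpow_dvd_of_sub_eq_natCast_mul lam m fun t => ?_)
    linarith [h t]

/-- if `λ` is nonzero with coprime coefficients, `γ₁,…,γ_{n-1} ∈ 𝒩(λ)`
are linearly independent over `ℚ`, and `(X^α - X^β)(γᵢ) = x^{α·γᵢ} - x^{β·γᵢ} = 0` in
`ℚ(x)` for each `i`, then `X^{λ⁺} - X^{λ⁻}` divides `X^α - X^β`. -/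
theorem Xpow_sub_dvd {n : ℕ} (lam : Fin n → ℤ) (hne : lam ≠ 0)
    (hcop : Finset.univ.gcd lam = 1)
    (γ : Fin (n - 1) → Fin n → ℤ)
    (hγ : ∀ i, ∑ t, lam t * γ i t = 0)
    (hind : LinearIndependent ℚ (fun i => fun t => ((γ i t : ℚ))))
    (α β : Fin n → ℕ)
    (hval : ∀ i,
      (algebraMap (Polynomial ℤ) RatX Polynomial.X) ^ (∑ t, (α t : ℤ) * γ i t) -
        (algebraMap (Polynomial ℤ) RatX Polynomial.X) ^ (∑ t, (β t : ℤ) * γ i t) = 0) :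
    (Xpow (lamPos lam) - Xpow (lamNeg lam)) ∣ (Xpow α - Xpow β) := by
  have hexp : ∀ i, ∑ t, (α t : ℤ) * γ i t = ∑ t, (β t : ℤ) * γ i t := fun i =>
    zpow_algebraMap_X_injective (sub_eq_zero.mp (hval i))
  have hlamQ : (fun t => (lam t : ℚ)) ≠ 0 := fun h0 =>
    hne (funext fun t => by simpa using congrFun h0 t)
  obtain ⟨q, hq⟩ := Submodule.mem_span_singleton.mp <|
    mem_span_singleton_of_dotProduct_eq_zero hind (by simp only [Fintype.card_fin]; omega) hlamQ
      (v := fun t => ((α t : ℤ) - β t : ℚ))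
      (fun i => by simp only [dotProduct]; exact_mod_cast hγ i)
      (fun i => by
        simp only [dotProduct, sub_mul, Finset.sum_sub_distrib]
        exact_mod_cast sub_eq_zero.mpr (hexp i))
  have hqlam : ∀ t ∈ Finset.univ, q * lam t = (((α t : ℤ) - β t : ℤ) : ℚ) := fun t _ => by
    simpa using congrFun hq t
  obtain ⟨k, rfl⟩ := Rat.exists_int_eq_of_mul_eq hcop hqlam
  exact Xpow_sub_Xpow_dvd_of_sub_eq_mul lam k fun t => by
    exact_mod_cast (hqlam t (Finset.mem_univ t)).symm

end WordEquations
end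

section
/- Let λ ∈ ℤⁿ ∖ {0} have coprime coefficients. Then the polynomial X^{λ⁺} − X^{λ⁻} is irreducible in ℤ[X₁,…,Xₙ]. -/
/-
In the Laurent ring `R[ℤⁿ]` the element `X^λ - 1` generates exactly the kernel of the
ring endomorphism induced by the retraction `x ↦ x - c(x) λ` of `ℤⁿ` onto `ker c`, where
`c : ℤⁿ → ℤ` is a Bézout functional with `c(λ) = 1`; as `R[ℤⁿ]` is a domain, that kernel is a
prime ideal. Up to the unit `X^{λ⁻}`, `X^λ - 1` is the image of `f = X^{λ⁺} - X^{λ⁻}`, and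
primality descends from `R[ℤⁿ]` to `R[X₁,…,Xₙ]` because denominators are monomials, which
are products of the primes `Xᵢ`, none of which divides `f`.
-/

open scoped BigOperators

open AddMonoidAlgebra MvPolynomial

namespace AddMonoidAlgebra

variable {R G : Type*} [CommRing R] [AddCommGroup G]

theorem isUnit_single_one (x : G) : IsUnit (single x (1 : R)) :=
  IsUnit.of_mul_eq_one (single (-x) 1) (by rw [single_mul_single, add_neg_cancel, mul_one,
    one_def])

theorem single_sub_one_dvd_single_zsmul_sub_one (g : G) (k : ℤ) :
    (single g 1 - 1 : AddMonoidAlgebra R G) ∣ single (k • g) 1 - 1 := by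
  have hnat (m : ℕ) : (single g 1 - 1 : AddMonoidAlgebra R G) ∣ single (m • g) 1 - 1 := by
    simpa using sub_one_dvd_pow_sub_one (single g (1 : R)) m
  obtain ⟨m, rfl | rfl⟩ := Int.eq_nat_or_neg k
  · simpa using hnat m
  · have : single (-(m : ℤ) • g) (1 : R) - 1 =
        -single (-(m : ℤ) • g) 1 * (single (m • g) 1 - 1) := by
      rw [neg_mul, mul_sub, single_mul_single, mul_one, mul_one, neg_smul, natCast_zsmul,
        neg_add_cancel, ← one_def]
      ring
    rw [this]
    exact (hnat m).mul_left _

/-- `x ↦ x - c x • g`; when `c g = 1` it is a retraction of `G` onto `ker c` killing `g`. -/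
def retractionAlong (c : G →+ ℤ) (g : G) : G →+ G :=
  AddMonoidHom.id G - (zmultiplesHom G g).comp c

theorem ker_mapDomainRingHom_retractionAlong {g : G} (c : G →+ ℤ) (hc : c g = 1) :
    RingHom.ker (mapDomainRingHom R (retractionAlong c g)) = Ideal.span {single g 1 - 1} := by
  set π := mapDomainRingHom R (retractionAlong c g)
  have hdvd (a : AddMonoidAlgebra R G) : single g 1 - 1 ∣ a - π a := by
    induction a using induction_linear with
    | zero => simp
    | add x y hx hy => simpa only [map_add, add_sub_add_comm] using dvd_add hx hy
    | single x r =>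
      have : single x r - π (single x r) =
          single (retractionAlong c g x) r * (single (c x • g) 1 - 1) := by
        rw [mul_sub, single_mul_single, mul_one, mul_one]
        simp [π, retractionAlong]
      rw [this]
      exact (single_sub_one_dvd_single_zsmul_sub_one g (c x)).mul_left _
  refine le_antisymm (fun a ha => ?_) ((Ideal.span_singleton_le_iff_mem _).2 ?_)
  · simpa [Ideal.mem_span_singleton, RingHom.mem_ker.1 ha] using hdvd a
  · have hg : retractionAlong c g g = 0 := by simp [retractionAlong, hc]
    rw [RingHom.mem_ker, map_sub, map_one, mapDomainRingHom_apply, mapDomain_single, hg,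
      ← one_def, sub_self]

theorem prime_single_sub_one [IsDomain (AddMonoidAlgebra R G)] {g : G} (c : G →+ ℤ)
    (hc : c g = 1) : Prime (single g 1 - 1 : AddMonoidAlgebra R G) := by
  have : Nontrivial R := by
    by_contra h
    rw [not_nontrivial_iff_subsingleton] at h
    exact not_subsingleton (AddMonoidAlgebra R G) inferInstance
  have hne : (single g 1 - 1 : AddMonoidAlgebra R G) ≠ 0 := by
    rw [sub_ne_zero, one_def, Ne, single_left_inj one_ne_zero]
    rintro rfl
    simp at hc
  rw [← Ideal.span_singleton_prime hne, ← ker_mapDomainRingHom_retractionAlong c hc]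
  exact RingHom.ker_isPrime _

end AddMonoidAlgebra

theorem exists_addMonoidHom_eq_one_of_gcd_eq_one {ι : Type*} [Fintype ι] {v : ι → ℤ}
    (h : Finset.univ.gcd v = 1) : ∃ c : (ι → ℤ) →+ ℤ, c v = 1 := by
  obtain ⟨w, hw⟩ := Finset.gcd_eq_sum_mul Finset.univ v
  refine ⟨AddMonoidHom.mk' (fun x => ∑ i, x i * w i) fun x y => ?_, h ▸ hw.symm⟩
  simp only [Pi.add_apply, add_mul, Finset.sum_add_distrib]

namespace MvPolynomial

variable {σ R : Type*} [CommRing R]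

theorem coeff_eq_zero_of_X_dvd {p : MvPolynomial σ R} {i : σ} (h : X i ∣ p) {d : σ →₀ ℕ}
    (hd : d i = 0) : coeff d p = 0 := by
  classical
  obtain ⟨q, rfl⟩ := h
  rw [coeff_X_mul', if_neg (Finsupp.notMem_support_iff.2 hd)]

theorem not_X_dvd_monomial_sub_monomial [Nontrivial R] {a b : σ →₀ ℕ} (hab : a ≠ b) {i : σ}
    (hi : a i = 0 ∨ b i = 0) : ¬ X i ∣ monomial a (1 : R) - monomial b 1 := by
  classical
  intro h
  rcases hi with hi | hi
  · simpa [coeff_monomial, hab.symm] using coeff_eq_zero_of_X_dvd h hi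
  · simpa [coeff_monomial, hab] using coeff_eq_zero_of_X_dvd h hi

theorem dvd_of_dvd_monomial_mul [IsDomain R] {f a : MvPolynomial σ R} (hX : ∀ i, ¬ X i ∣ f)
    {d : σ →₀ ℕ} (h : f ∣ monomial d 1 * a) : f ∣ a := by
  induction d using Finsupp.induction generalizing a with
  | zero => simpa using h
  | single_add i k d _ _ ih =>
    have hpow {b : MvPolynomial σ R} (k : ℕ) (hb : f ∣ X i ^ k * b) : f ∣ b := by
      induction k generalizing b with
      | zero => simpa using hb
      | succ k ihk =>
        rw [pow_succ', mul_assoc] at hb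
        exact ihk ((X_prime.left_dvd_or_dvd_right_of_dvd_mul hb).resolve_left (hX i))
    rw [← mul_one (1 : R), ← monomial_mul, mul_assoc, ← X_pow_eq_monomial] at h
    exact ih (hpow k h)

variable (σ) in
noncomputable def expToInt : (σ →₀ ℕ) →+ (σ → ℤ) :=
  ((Nat.castAddMonoidHom ℤ).compLeft σ).comp Finsupp.coeFnAddHom

theorem expToInt_apply (d : σ →₀ ℕ) (i : σ) : expToInt σ d i = d i := rfl

theorem expToInt_injective : Function.Injective (expToInt σ) := fun _ _ h =>
  Finsupp.ext fun i => Nat.cast_injective (congrFun h i)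

theorem exists_add_expToInt_eq_expToInt [Finite σ] (x : σ → ℤ) :
    ∃ d₀ d₁ : σ →₀ ℕ, x + expToInt σ d₁ = expToInt σ d₀ := by
  refine ⟨Finsupp.equivFunOnFinite.symm fun i => (x i).toNat,
    Finsupp.equivFunOnFinite.symm fun i => (-x i).toNat, ?_⟩
  ext i
  simp only [Pi.add_apply, expToInt_apply, Finsupp.coe_equivFunOnFinite_symm]
  omega

variable (R) in
noncomputable def toLaurent : MvPolynomial σ R →+* AddMonoidAlgebra R (σ → ℤ) :=
  mapDomainRingHom R (expToInt σ)

theorem toLaurent_monomial (d : σ →₀ ℕ) (r : R) :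
    toLaurent R (monomial d r) = single (expToInt σ d) r :=
  mapDomain_single

theorem toLaurent_injective : Function.Injective (toLaurent R (σ := σ)) :=
  mapDomain_injective expToInt_injective

theorem exists_mul_single_eq_toLaurent [Finite σ] (x : AddMonoidAlgebra R (σ → ℤ)) :
    ∃ (d : σ →₀ ℕ) (p : MvPolynomial σ R), x * single (expToInt σ d) 1 = toLaurent R p := by
  induction x using induction_linear with
  | zero => exact ⟨0, 0, by simp⟩
  | add x y hx hy =>
    obtain ⟨d, p, hp⟩ := hx
    obtain ⟨e, q, hq⟩ := hy
    refine ⟨d + e, p * monomial e 1 + q * monomial d 1, ?_⟩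
    simp only [map_add, map_mul, toLaurent_monomial, ← hp, ← hq, single_mul_single, mul_one,
      add_mul, mul_assoc]
    rw [add_comm (expToInt σ e)]
  | single x r =>
    obtain ⟨d₀, d₁, h⟩ := exists_add_expToInt_eq_expToInt x
    exact ⟨d₁, monomial d₀ r, by rw [toLaurent_monomial, single_mul_single, h, mul_one]⟩

theorem prime_of_prime_toLaurent [Finite σ] [IsDomain R] {f : MvPolynomial σ R}
    (hX : ∀ i, ¬ X i ∣ f) (hf : Prime (toLaurent R f)) : Prime f := by
  have hpull (a : MvPolynomial σ R) (ha : toLaurent R f ∣ toLaurent R a) : f ∣ a := by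
    obtain ⟨t, ht⟩ := ha
    obtain ⟨d, p, hp⟩ := exists_mul_single_eq_toLaurent t
    refine dvd_of_dvd_monomial_mul (d := d) hX ⟨p, toLaurent_injective ?_⟩
    rw [map_mul, map_mul, toLaurent_monomial, ← hp, mul_comm, ht, mul_assoc]
  refine ⟨fun h => hf.ne_zero (by rw [h, map_zero]), fun h => hf.not_isUnit (h.map _),
    fun a b hab => ?_⟩
  exact (hf.dvd_or_dvd (by simpa only [map_mul] using map_dvd (toLaurent R) hab)).imp
    (hpull a) (hpull b)

end MvPolynomial

namespace WordEquations

theorem Xpow_eq_monomial {n : ℕ} (α : Fin n → ℕ) :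
    Xpow α = monomial (Finsupp.equivFunOnFinite.symm α) 1 := by
  rw [monomial_eq, C_1, one_mul, Finsupp.prod_fintype _ _ fun _ => pow_zero _]
  rfl

theorem lamPos_eq_zero_or_lamNeg_eq_zero {n : ℕ} (lam : Fin n → ℤ) (i : Fin n) :
    lamPos lam i = 0 ∨ lamNeg lam i = 0 := by
  simp only [lamPos, lamNeg]
  omega

theorem lamNeg_add_eq_lamPos {n : ℕ} (lam : Fin n → ℤ) (i : Fin n) :
    (lamNeg lam i : ℤ) + lam i = lamPos lam i := by
  simp only [lamPos, lamNeg]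
  omega

theorem lamPos_ne_lamNeg {n : ℕ} {lam : Fin n → ℤ} (h : lam ≠ 0) : lamPos lam ≠ lamNeg lam :=
  fun he => h (funext fun i => by simpa [he] using (lamNeg_add_eq_lamPos lam i).symm)

theorem toLaurent_Xpow_lamPos_sub_Xpow_lamNeg {n : ℕ} (lam : Fin n → ℤ) :
    toLaurent ℤ (Xpow (lamPos lam) - Xpow (lamNeg lam)) =
      single (fun i => (lamNeg lam i : ℤ)) 1 * (single lam 1 - 1) := by
  rw [Xpow_eq_monomial, Xpow_eq_monomial, map_sub, toLaurent_monomial, toLaurent_monomial,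
    mul_sub, single_mul_single, mul_one, mul_one]
  congr 2
  ext i
  exact (lamNeg_add_eq_lamPos lam i).symm

theorem Xpow_sub_irreducible_general {n : ℕ} (lam : Fin n → ℤ)
    (hcop : Finset.univ.gcd lam = 1) :
    Irreducible (Xpow (lamPos lam) - Xpow (lamNeg lam)) := by
  obtain ⟨c, hc⟩ := exists_addMonoidHom_eq_one_of_gcd_eq_one hcop
  have hlam : lam ≠ 0 := by
    rintro rfl
    simp at hc
  have hX (i : Fin n) : ¬ X i ∣ Xpow (lamPos lam) - Xpow (lamNeg lam) := by
    rw [Xpow_eq_monomial, Xpow_eq_monomial]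
    exact not_X_dvd_monomial_sub_monomial (by simpa using lamPos_ne_lamNeg hlam)
      (lamPos_eq_zero_or_lamNeg_eq_zero lam i)
  refine (prime_of_prime_toLaurent hX ?_).irreducible
  rw [toLaurent_Xpow_lamPos_sub_Xpow_lamNeg]
  exact (associated_unit_mul_left _ _ (isUnit_single_one _)).symm.prime
    (prime_single_sub_one c hc)

/-- for `λ ∈ ℤⁿ ∖ {0}` with coprime coefficients, the polynomial
`X^{λ⁺} - X^{λ⁻}` is irreducible in `ℤ[X₁,…,Xₙ]`. -/
theorem Xpow_sub_irreducible {n : ℕ} (lam : Fin n → ℤ) (hne : lam ≠ 0)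
    (hcop : Finset.univ.gcd lam = 1) :
    Irreducible (Xpow (lamPos lam) - Xpow (lamNeg lam)) :=
  Xpow_sub_irreducible_general lam hcop

end WordEquations
end
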